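/- arXiv:2504.15752 — 9 statements merged into one kernel-verified Lean document; each statement's English description precedes it below -/
import Mathlib

section
/- Let f : ℝⁿ → ℝ be twice continuously differentiable and λ > 0. Let (ε_g^k) and (ε_h^k) be sequences of positive reals decreasing to 0 and let (w^k) be a sequence in ℝⁿ converging to w* such that for every k: (i) ‖g^{ε_g^k}(w^k)‖ ≤ ε_g^k, and (ii) ⟨S_{w^k,ε_g^k} u, ∇²f(w^k)·S_{w^k,ε_g^k} u⟩ ≥ −ε_h^k‖u‖² for every u ∈ ℝⁿ with u_i = 0 whenever w^k_i = 0. Then g(w*) = 0 and ⟨z, ∇²f(w*) z⟩ ≥ 0 for every z ∈ ℝⁿ with z_i = 0 whenever w*_i = 0. -/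
/-!
Condition (i) says `g^{ε_k}(w^k) → 0`. Where `w*_i ≠ 0`, eventually `|w^k_i| > √ε_k`, so that
coordinate of `g^{ε_k}(w^k)` is `∂_i f(w^k) ± λ`, and continuity of `∇f` gives the sign conditions
at `w*`. In every coordinate `|∂_i f(w^k)| ≤ λ + |ε_k^{3/4}| + |g^{ε_k}(w^k)_i|`, because the
clipped value is at most `λ + ε_k^{3/4}` in size; in the limit `|∂_i f(w*)| ≤ λ`.
For the second-order condition, a `z` supported on the support of `w*` is eventually fixed by
`S_{w^k,ε_k}` and admissible in (ii), so `⟪z, ∇²f(w^k) z⟫ ≥ -ε_h^k ‖z‖²`; the Hessian is continuous.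
-/

open scoped RealInnerProductSpace

noncomputable section

/-- `ℝⁿ` with the Euclidean norm. -/
abbrev E (n : ℕ) := EuclideanSpace ℝ (Fin n)

/-- The vector `g(x)` measuring first-order stationarity of `f + lam‖·‖₁`. -/
def gvec (n : ℕ) (f : E n → ℝ) (lam : ℝ) (x : E n) : E n := WithLp.toLp 2 fun i =>
  if 0 < x i then gradient f x i + lam
  else if x i < 0 then gradient f x i - lam
  else gradient f x i - min (max (-lam) (gradient f x i)) lam

/-- The proximal-gradient residual `G_t(x) = t (x - prox_{(lam/t)‖·‖₁}(x - ∇f(x)/t))`. -/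
def Gres (n : ℕ) (f : E n → ℝ) (lam t : ℝ) (x : E n) : E n := WithLp.toLp 2 fun i =>
  if (gradient f x i + lam) / t < x i then gradient f x i + lam
  else if x i < (gradient f x i - lam) / t then gradient f x i - lam
  else t * x i

/-- The proximal-gradient update `P_t(x) = prox_{(lam/t)‖·‖₁}(x - ∇f(x)/t)` (soft-thresholding). -/
def Pt (n : ℕ) (f : E n → ℝ) (lam t : ℝ) (x : E n) : E n := WithLp.toLp 2 fun i =>
  if lam / t < x i - gradient f x i / t then x i - gradient f x i / t - lam / t
  else if x i - gradient f x i / t < -(lam / t) then x i - gradient f x i / t + lam / t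
  else 0

/-- The objective `φ(x) = f(x) + lam ‖x‖₁`. -/
def phi (n : ℕ) (f : E n → ℝ) (lam : ℝ) (x : E n) : ℝ := f x + lam * ∑ i, |x i|

/-- The Hessian of `f` at `x`, as a continuous linear map. -/
def hess (n : ℕ) (f : E n → ℝ) (x : E n) : E n →L[ℝ] E n := fderiv ℝ (gradient f) x

/-- The scaling map `S_{x,ε}`: identity on coordinates with `|x_i| > √ε`, multiplication by
`x_i` on the others. -/
def Smap (n : ℕ) (x : E n) (eps : ℝ) (u : E n) : E n := WithLp.toLp 2 fun i =>
  if Real.sqrt eps < |x i| then u i else x i * u i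

/-- The relaxed first-order residual vector `g^ε(x)`. -/
def gveps (n : ℕ) (f : E n → ℝ) (lam eps : ℝ) (x : E n) : E n := WithLp.toLp 2 fun i =>
  if Real.sqrt eps < x i then gradient f x i + lam
  else if x i < -Real.sqrt eps then gradient f x i - lam
  else gradient f x i -
    min (max (-(lam + eps ^ ((3:ℝ)/4))) (gradient f x i)) (lam + eps ^ ((3:ℝ)/4))

open Filter Topology

theorem ContDiff.contDiff_gradient {F : Type*} [NormedAddCommGroup F] [InnerProductSpace ℝ F]
    [CompleteSpace F] {f : F → ℝ} {k : WithTop ℕ∞} (hf : ContDiff ℝ (k + 1) f) :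
    ContDiff ℝ k (gradient f) :=
  (InnerProductSpace.toDual ℝ F).symm.contDiff.comp (hf.fderiv_right le_rfl)

theorem abs_min_max_neg_le (a L : ℝ) : |min (max (-L) a) L| ≤ |L| := by
  rcases le_total 0 L with hL | hL
  · rw [abs_of_nonneg hL, abs_le]
    exact ⟨le_min (le_max_left _ _) (by linarith), min_le_right _ _⟩
  · rw [min_eq_right (le_trans (by linarith) (le_max_left _ _))]

section Coordinates

variable {n : ℕ}

theorem tendsto_apply_of_tendsto {ι : Type*} {l : Filter ι} {w : ι → E n} {x : E n}
    (hw : Tendsto w l (𝓝 x)) (i : Fin n) : Tendsto (fun k => w k i) l (𝓝 (x i)) :=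
  ((EuclideanSpace.proj i : E n →L[ℝ] ℝ).continuous.tendsto x).comp hw

variable {f : E n → ℝ} {lam eps : ℝ} {x : E n} {i : Fin n}

theorem gveps_apply_of_sqrt_lt (h : √eps < x i) :
    gveps n f lam eps x i = gradient f x i + lam := by
  simp [gveps, h]

theorem gveps_apply_of_lt_neg_sqrt (h : x i < -√eps) :
    gveps n f lam eps x i = gradient f x i - lam := by
  have : ¬ √eps < x i := by linarith [Real.sqrt_nonneg eps]
  simp [gveps, h, this]

theorem abs_gradient_apply_le (hlam : 0 ≤ lam) :
    |gradient f x i| ≤ lam + |eps ^ ((3:ℝ)/4)| + |gveps n f lam eps x i| := by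
  have := abs_nonneg (eps ^ ((3:ℝ)/4))
  simp only [gveps, PiLp.toLp_apply]
  split_ifs
  · have h := abs_sub (gradient f x i + lam) lam
    rw [add_sub_cancel_right, abs_of_nonneg hlam] at h
    linarith
  · linarith [abs_sub_abs_le_abs_sub (gradient f x i) lam, abs_of_nonneg hlam]
  · have hc := abs_min_max_neg_le (gradient f x i) (lam + eps ^ ((3:ℝ)/4))
    have := abs_sub_abs_le_abs_sub (gradient f x i)
      (min (max (-(lam + eps ^ ((3:ℝ)/4))) (gradient f x i)) (lam + eps ^ ((3:ℝ)/4)))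
    linarith [abs_add_le lam (eps ^ ((3:ℝ)/4)), abs_of_nonneg hlam]

theorem gvec_apply_eq_zero (hpos : 0 < x i → gradient f x i + lam = 0)
    (hneg : x i < 0 → gradient f x i - lam = 0) (hzero : x i = 0 → |gradient f x i| ≤ lam) :
    gvec n f lam x i = 0 := by
  rcases lt_trichotomy (x i) 0 with hi | hi | hi
  · simp [gvec, hi, hi.asymm, hneg hi]
  · obtain ⟨hl, hu⟩ := abs_le.1 (hzero hi)
    simp [gvec, hi, max_eq_right hl, min_eq_left hu]
  · simp [gvec, hi, hpos hi]

theorem smap_eq_self {u : E n} (h : ∀ i, u i ≠ 0 → √eps < |x i|) : Smap n x eps u = u := by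
  ext i
  by_cases hi : u i = 0
  · simp [Smap, hi]
  · simp [Smap, h i hi]

end Coordinates

section Limits

variable {ι : Type*} {l : Filter ι} {n : ℕ} {f : E n → ℝ} {lam : ℝ} {eps : ι → ℝ}
  {w : ι → E n} {wstar : E n}

theorem gradient_apply_add_eq_zero_of_tendsto [l.NeBot] (hgrad : ContinuousAt (gradient f) wstar)
    (heps : Tendsto eps l (𝓝 0)) (hw : Tendsto w l (𝓝 wstar))
    (hr : Tendsto (fun k => gveps n f lam (eps k) (w k)) l (𝓝 0)) {i : Fin n}
    (hi : 0 < wstar i) : gradient f wstar i + lam = 0 := by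
  have hsqrt : Tendsto (fun k => √(eps k)) l (𝓝 0) := by simpa using heps.sqrt
  have hlt : ∀ᶠ k in l, √(eps k) < w k i :=
    hsqrt.eventually_lt (tendsto_apply_of_tendsto hw i) hi
  refine tendsto_nhds_unique
    ((tendsto_apply_of_tendsto (hgrad.tendsto.comp hw) i).add_const lam) ?_
  refine (tendsto_apply_of_tendsto hr i).congr' ?_
  filter_upwards [hlt] with k hk using gveps_apply_of_sqrt_lt hk

theorem gradient_apply_sub_eq_zero_of_tendsto [l.NeBot] (hgrad : ContinuousAt (gradient f) wstar)
    (heps : Tendsto eps l (𝓝 0)) (hw : Tendsto w l (𝓝 wstar))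
    (hr : Tendsto (fun k => gveps n f lam (eps k) (w k)) l (𝓝 0)) {i : Fin n}
    (hi : wstar i < 0) : gradient f wstar i - lam = 0 := by
  have hsqrt : Tendsto (fun k => -√(eps k)) l (𝓝 0) := by simpa using heps.sqrt.neg
  have hlt : ∀ᶠ k in l, w k i < -√(eps k) :=
    (tendsto_apply_of_tendsto hw i).eventually_lt hsqrt hi
  refine tendsto_nhds_unique
    ((tendsto_apply_of_tendsto (hgrad.tendsto.comp hw) i).sub_const lam) ?_
  refine (tendsto_apply_of_tendsto hr i).congr' ?_
  filter_upwards [hlt] with k hk using gveps_apply_of_lt_neg_sqrt hk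

theorem abs_gradient_apply_le_of_tendsto [l.NeBot] (hlam : 0 ≤ lam)
    (hgrad : ContinuousAt (gradient f) wstar) (heps : Tendsto eps l (𝓝 0))
    (hw : Tendsto w l (𝓝 wstar)) (hr : Tendsto (fun k => gveps n f lam (eps k) (w k)) l (𝓝 0))
    (i : Fin n) : |gradient f wstar i| ≤ lam := by
  have hpow : Tendsto (fun k => eps k ^ ((3:ℝ)/4)) l (𝓝 0) := by
    simpa using heps.rpow_const (p := (3:ℝ)/4) (Or.inr (by norm_num))
  have hbound : Tendsto (fun k => lam + |eps k ^ ((3:ℝ)/4)| + |gveps n f lam (eps k) (w k) i|) l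
      (𝓝 lam) := by
    simpa using (hpow.abs.const_add lam).add (tendsto_apply_of_tendsto hr i).abs
  exact le_of_tendsto_of_tendsto (tendsto_apply_of_tendsto (hgrad.tendsto.comp hw) i).abs hbound
    (.of_forall fun _ => abs_gradient_apply_le hlam)

theorem gvec_eq_zero_of_tendsto [l.NeBot] (hlam : 0 ≤ lam) (hgrad : ContinuousAt (gradient f) wstar)
    (heps : Tendsto eps l (𝓝 0)) (hw : Tendsto w l (𝓝 wstar))
    (hr : Tendsto (fun k => gveps n f lam (eps k) (w k)) l (𝓝 0)) : gvec n f lam wstar = 0 := by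
  ext i
  exact gvec_apply_eq_zero (gradient_apply_add_eq_zero_of_tendsto hgrad heps hw hr)
    (gradient_apply_sub_eq_zero_of_tendsto hgrad heps hw hr)
    fun _ => abs_gradient_apply_le_of_tendsto hlam hgrad heps hw hr i

theorem eventually_sqrt_lt_abs_apply (heps : Tendsto eps l (𝓝 0)) (hw : Tendsto w l (𝓝 wstar)) :
    ∀ᶠ k in l, ∀ i, wstar i ≠ 0 → √(eps k) < |w k i| := by
  have hsqrt : Tendsto (fun k => √(eps k)) l (𝓝 0) := by simpa using heps.sqrt
  refine eventually_all.2 fun i => ?_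
  by_cases hi : wstar i = 0
  · exact .of_forall fun _ hi' => absurd hi hi'
  · filter_upwards [hsqrt.eventually_lt (tendsto_apply_of_tendsto hw i).abs (abs_pos.2 hi)]
      with k hk _ using hk

theorem inner_hess_nonneg_of_tendsto [l.NeBot] {epsh : ι → ℝ} (hH : ContinuousAt (hess n f) wstar)
    (heps : Tendsto eps l (𝓝 0)) (hepsh : Tendsto epsh l (𝓝 0)) (hw : Tendsto w l (𝓝 wstar))
    (h2 : ∀ᶠ k in l, ∀ u : E n, (∀ i, w k i = 0 → u i = 0) →
      -(epsh k) * ‖u‖ ^ 2 ≤ ⟪Smap n (w k) (eps k) u, hess n f (w k) (Smap n (w k) (eps k) u)⟫)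
    {z : E n} (hz : ∀ i, wstar i = 0 → z i = 0) : 0 ≤ ⟪z, hess n f wstar z⟫ := by
  have key : ∀ᶠ k in l, -(epsh k) * ‖z‖ ^ 2 ≤ ⟪z, hess n f (w k) z⟫ := by
    filter_upwards [h2, eventually_sqrt_lt_abs_apply heps hw] with k h2k hk
    have hsupp : ∀ i, z i ≠ 0 → √(eps k) < |w k i| := fun i hi => hk i (mt (hz i) hi)
    have hzw : ∀ i, w k i = 0 → z i = 0 := fun i hwi => by
      by_contra hzi
      simpa [hwi] using (Real.sqrt_nonneg _).trans_lt (hsupp i hzi)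
    simpa only [smap_eq_self hsupp] using h2k z hzw
  have hL : Tendsto (fun k => -(epsh k) * ‖z‖ ^ 2) l (𝓝 0) := by
    simpa using hepsh.neg.mul_const (‖z‖ ^ 2)
  have hR : Tendsto (fun k => ⟪z, hess n f (w k) z⟫) l (𝓝 ⟪z, hess n f wstar z⟫) :=
    tendsto_const_nhds.inner
      (((ContinuousLinearMap.apply ℝ (E n) z).continuous.tendsto _).comp (hH.tendsto.comp hw))
  exact le_of_tendsto_of_tendsto hL hR key

end Limits

theorem stmt1_general {n : ℕ} (f : E n → ℝ) (hf : ContDiff ℝ 2 f)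
    (lam : ℝ) (hlam : 0 < lam)
    (εg εh : ℕ → ℝ)
    (hεg0 : Filter.Tendsto εg Filter.atTop (nhds 0))
    (hεh0 : Filter.Tendsto εh Filter.atTop (nhds 0))
    (w : ℕ → E n) (wstar : E n) (hw : Filter.Tendsto w Filter.atTop (nhds wstar))
    (h1 : ∀ k, ‖gveps n f lam (εg k) (w k)‖ ≤ εg k)
    (h2 : ∀ k, ∀ u : E n, (∀ i, w k i = 0 → u i = 0) →
      -(εh k) * ‖u‖ ^ 2 ≤
        ⟪Smap n (w k) (εg k) u, hess n f (w k) (Smap n (w k) (εg k) u)⟫) :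
    gvec n f lam wstar = 0 ∧
      ∀ z : E n, (∀ i, wstar i = 0 → z i = 0) → 0 ≤ ⟪z, hess n f wstar z⟫ := by
  have hgrad : ContDiff ℝ 1 (gradient f) := hf.contDiff_gradient
  have hr : Tendsto (fun k => gveps n f lam (εg k) (w k)) atTop (𝓝 0) := squeeze_zero_norm h1 hεg0
  exact ⟨gvec_eq_zero_of_tendsto hlam.le hgrad.continuous.continuousAt hεg0 hw hr,
    fun z hz => inner_hess_nonneg_of_tendsto (hgrad.continuous_fderiv one_ne_zero).continuousAt
      hεg0 hεh0 hw (.of_forall h2) hz⟩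

/-- Limits of weak approximate second-order stationary points satisfy the
exact (weak) second-order necessary optimality conditions. -/
theorem stmt1 {n : ℕ} (hn : 1 ≤ n) (f : E n → ℝ) (hf : ContDiff ℝ 2 f)
    (lam : ℝ) (hlam : 0 < lam)
    (εg εh : ℕ → ℝ) (hεgpos : ∀ k, 0 < εg k) (hεhpos : ∀ k, 0 < εh k)
    (hεgmono : Antitone εg) (hεhmono : Antitone εh)
    (hεg0 : Filter.Tendsto εg Filter.atTop (nhds 0))
    (hεh0 : Filter.Tendsto εh Filter.atTop (nhds 0))
    (w : ℕ → E n) (wstar : E n) (hw : Filter.Tendsto w Filter.atTop (nhds wstar))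
    (h1 : ∀ k, ‖gveps n f lam (εg k) (w k)‖ ≤ εg k)
    (h2 : ∀ k, ∀ u : E n, (∀ i, w k i = 0 → u i = 0) →
      -(εh k) * ‖u‖ ^ 2 ≤
        ⟪Smap n (w k) (εg k) u, hess n f (w k) (Smap n (w k) (εg k) u)⟫) :
    gvec n f lam wstar = 0 ∧
      ∀ z : E n, (∀ i, wstar i = 0 → z i = 0) → 0 ≤ ⟪z, hess n f wstar z⟫ :=
  stmt1_general f hf lam hlam εg εh hεg0 hεh0 w wstar hw h1 h2
end
end

section
/- Let l ≥ 1, let A be a real symmetric l×l matrix, and let D = diag(d₁, …, d_l) be a diagonal matrix with d_i ≠ 0 for every i. Then λ_min(A) ≥ (1 / min_i d_i²) · min{λ_min(D·A·D), 0}. -/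
/-!
Substituting `x = D y` turns the quadratic form of `A` into that of `D A D`, so
`xᵀ A x ≥ c ‖D⁻¹ x‖²` with `c = min (λ_min (D A D)) 0`. Since `c ≤ 0`, the bound
`‖D⁻¹ x‖² ≤ ‖x‖² / min_i d_i²` only weakens it to `xᵀ A x ≥ (c / min_i d_i²) ‖x‖²`, and a lower
Rayleigh bound is a lower bound for every eigenvalue.
-/

open Matrix Unitary
open scoped ComplexOrder

lemma Matrix.IsHermitian.posSemidef_sub_smul_one {𝕜 : Type*} [RCLike 𝕜] {n : Type*} [Fintype n]
    [DecidableEq n] {B : Matrix n n 𝕜} (hB : B.IsHermitian) {c : ℝ}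
    (hc : ∀ i, c ≤ hB.eigenvalues i) : (B - (c : 𝕜) • 1).PosSemidef := by
  set U : Matrix n n 𝕜 := (hB.eigenvectorUnitary : Matrix n n 𝕜)
  have hdiag :
      (diagonal (RCLike.ofReal ∘ hB.eigenvalues) - (c : 𝕜) • 1 : Matrix n n 𝕜).PosSemidef := by
    rw [smul_one_eq_diagonal, diagonal_sub]
    refine PosSemidef.diagonal fun i ↦ ?_
    simpa [RCLike.ofReal_nonneg] using hc i
  convert hdiag.mul_mul_conjTranspose_same U using 1
  rw [mul_sub, sub_mul, mul_smul_comm, smul_mul_assoc, mul_one, ← star_eq_conjTranspose,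
    Unitary.mul_star_self_of_mem hB.eigenvectorUnitary.2, ← conjStarAlgAut_apply (S := 𝕜),
    ← hB.spectral_theorem]

lemma Matrix.IsHermitian.mul_dotProduct_self_le_dotProduct_mulVec {n : Type*} [Fintype n]
    [DecidableEq n] {B : Matrix n n ℝ} (hB : B.IsHermitian) {c : ℝ}
    (hc : ∀ i, c ≤ hB.eigenvalues i) (x : n → ℝ) : c * (x ⬝ᵥ x) ≤ x ⬝ᵥ B *ᵥ x := by
  have h := (hB.posSemidef_sub_smul_one hc).dotProduct_mulVec_nonneg x
  rw [star_trivial, sub_mulVec, dotProduct_sub, smul_mulVec, one_mulVec, dotProduct_smul,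
    smul_eq_mul] at h
  simpa using h

lemma Matrix.IsHermitian.le_eigenvalues_of_forall_mul_dotProduct_self_le {n : Type*} [Fintype n]
    [DecidableEq n] {A : Matrix n n ℝ} (hA : A.IsHermitian) {c : ℝ}
    (hc : ∀ x : n → ℝ, c * (x ⬝ᵥ x) ≤ x ⬝ᵥ A *ᵥ x) (i : n) : c ≤ hA.eigenvalues i := by
  set v := hA.eigenvectorBasis i
  have hv : v.ofLp ⬝ᵥ v.ofLp = 1 := by
    have h : inner ℝ v v = 1 := by
      rw [real_inner_self_eq_norm_sq, hA.eigenvectorBasis.orthonormal.1 i, one_pow]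
    rwa [EuclideanSpace.inner_eq_star_dotProduct, star_trivial] at h
  simpa [hv, hA.eigenvalues_eq i] using hc v.ofLp

lemma Matrix.dotProduct_diagonal_mul_mul_diagonal_mulVec {R : Type*} [CommSemiring R]
    {n : Type*} [Fintype n] [DecidableEq n] (d x : n → R) (A : Matrix n n R) :
    x ⬝ᵥ (diagonal d * A * diagonal d) *ᵥ x = (d * x) ⬝ᵥ A *ᵥ (d * x) := by
  have hx : diagonal d *ᵥ x = d * x := funext (mulVec_diagonal d x)
  have hx' : x ᵥ* diagonal d = d * x := funext fun i ↦ (vecMul_diagonal x d i).trans (mul_comm _ _)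
  rw [← mulVec_mulVec, ← mulVec_mulVec, dotProduct_mulVec, hx, hx']

lemma Matrix.dotProduct_div_self_le {n : Type*} [Fintype n] (v d : n → ℝ) {m : ℝ} (hm : 0 < m)
    (hmd : ∀ i, m ≤ d i ^ 2) : (v / d) ⬝ᵥ (v / d) ≤ (v ⬝ᵥ v) / m := by
  simp only [dotProduct, Finset.sum_div, Pi.div_apply]
  gcongr with i
  rw [div_mul_div_comm]
  exact div_le_div_of_nonneg_left (mul_self_nonneg _) hm ((hmd i).trans_eq (sq _))

/-- For a real symmetric `l × l` matrix `A` and an invertible diagonal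
matrix `D = diag d`, the smallest eigenvalue of `A` is at least
`(1 / min_i d_i²) · min{λ_min(D·A·D), 0}`. -/
theorem stmt2 {l : ℕ} (hl : 1 ≤ l) (A : Matrix (Fin l) (Fin l) ℝ) (hA : A.IsHermitian)
    (d : Fin l → ℝ) (hd : ∀ i, d i ≠ 0)
    (hDAD : (Matrix.diagonal d * A * Matrix.diagonal d).IsHermitian) :
    (1 / ⨅ i, d i ^ 2) * min (⨅ i, hDAD.eigenvalues i) 0 ≤ ⨅ i, hA.eigenvalues i := by
  have : Nonempty (Fin l) := ⟨⟨0, hl⟩⟩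
  set m := ⨅ i, d i ^ 2
  set c := min (⨅ i, hDAD.eigenvalues i) 0
  have hmd (i : Fin l) : m ≤ d i ^ 2 := ciInf_le (Set.finite_range _).bddBelow i
  have hm : 0 < m := by
    obtain ⟨j, hj⟩ := exists_eq_ciInf_of_finite (f := fun i ↦ d i ^ 2)
    exact (pow_two_pos_of_ne_zero (hd j)).trans_eq hj
  have hc (i : Fin l) : c ≤ hDAD.eigenvalues i :=
    (min_le_left _ _).trans (ciInf_le (Set.finite_range _).bddBelow i)
  refine le_ciInf (hA.le_eigenvalues_of_forall_mul_dotProduct_self_le fun x ↦ ?_)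
  have hdx : d * (x / d) = x := funext fun i ↦ mul_div_cancel₀ (x i) (hd i)
  calc 1 / m * c * (x ⬝ᵥ x) = c * ((x ⬝ᵥ x) / m) := by ring
    _ ≤ c * ((x / d) ⬝ᵥ (x / d)) :=
      mul_le_mul_of_nonpos_left (dotProduct_div_self_le x d hm hmd) (min_le_right _ _)
    _ ≤ (x / d) ⬝ᵥ (diagonal d * A * diagonal d) *ᵥ (x / d) :=
      hDAD.mul_dotProduct_self_le_dotProduct_mulVec hc _
    _ = x ⬝ᵥ A *ᵥ x := by rw [dotProduct_diagonal_mul_mul_diagonal_mulVec, hdx]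
end

section
/- Let f : ℝⁿ → ℝ be differentiable and λ > 0. Then for every x ∈ ℝⁿ, every t > 0, and every index i, one has |G_t(x)_i| ≤ |g(x)_i|; consequently ‖G_t(x)‖ ≤ ‖g(x)‖ for all t > 0. -/
open scoped RealInnerProductSpace

noncomputable section

/-!
Both vectors are built coordinatewise from the interval `I = [∂ᵢf(x) - λ, ∂ᵢf(x) + λ]`:
`G_t(x)_i` is the projection of `t xᵢ` onto `I`, while `g(x)_i` is the right endpoint of `I`
if `xᵢ > 0`, the left endpoint if `xᵢ < 0`, and the projection of `0` onto `I` if `xᵢ = 0`.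
Projecting a nonnegative point onto an interval cannot produce something larger in absolute
value than the right endpoint (symmetrically for nonpositive points and the left endpoint).
-/

theorem EuclideanSpace.norm_le_norm_of_forall_norm_le {𝕜 ι : Type*} [RCLike 𝕜] [Fintype ι]
    {x y : EuclideanSpace 𝕜 ι} (h : ∀ i, ‖x i‖ ≤ ‖y i‖) : ‖x‖ ≤ ‖y‖ := by
  rw [EuclideanSpace.norm_eq, EuclideanSpace.norm_eq]
  gcongr with i
  exact h i

section Clamp

variable {a b y : ℝ}

theorem abs_max_min_le_abs_right (hy : 0 ≤ y) (hab : a ≤ b) : |max a (min y b)| ≤ |b| := by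
  rcases le_total 0 b with hb | hb
  · rw [abs_of_nonneg (le_max_of_le_right (le_min hy hb)), abs_of_nonneg hb]
    exact max_le hab (min_le_right y b)
  · rw [min_eq_right (hb.trans hy), max_eq_right hab]

theorem abs_max_min_le_abs_left (hy : y ≤ 0) (hab : a ≤ b) : |max a (min y b)| ≤ |a| := by
  rcases le_total a 0 with ha | ha
  · rw [abs_of_nonpos (max_le ha (min_le_of_left_le hy)), abs_of_nonpos ha]
    exact neg_le_neg (le_max_left a _)
  · rw [min_eq_left (hy.trans (ha.trans hab)), max_eq_left (hy.trans ha)]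

end Clamp

section Coordinates

variable {n : ℕ} (f : E n → ℝ) {lam t : ℝ}

theorem Gres_apply_eq_max_min (hlam : 0 ≤ lam) (ht : 0 < t) (x : E n) (i : Fin n) :
    Gres n f lam t x i =
      max (gradient f x i - lam) (min (t * x i) (gradient f x i + lam)) := by
  have hab : gradient f x i - lam ≤ gradient f x i + lam := by linarith
  simp only [Gres, PiLp.toLp_apply, div_lt_iff₀' ht, lt_div_iff₀' ht]
  split_ifs with hup hlow
  · rw [min_eq_right hup.le, max_eq_right hab]
  · rw [min_eq_left (not_lt.mp hup), max_eq_left hlow.le]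
  · rw [min_eq_left (not_lt.mp hup), max_eq_right (not_lt.mp hlow)]

theorem gvec_apply_of_eq_zero (hlam : 0 ≤ lam) (x : E n) (i : Fin n) (hx : x i = 0) :
    gvec n f lam x i = max (gradient f x i - lam) (min 0 (gradient f x i + lam)) := by
  simp only [gvec, PiLp.toLp_apply, hx, lt_irrefl, if_false]
  rcases le_total (gradient f x i) (-lam) with hd | hd
  · rw [max_eq_left hd, min_eq_left (by linarith), min_eq_right (by linarith),
      max_eq_right (by linarith)]
    ring
  rcases le_total (gradient f x i) lam with hd' | hd'
  · rw [max_eq_right hd, min_eq_left hd', min_eq_left (by linarith), max_eq_right (by linarith)]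
    ring
  · rw [max_eq_right hd, min_eq_right hd', min_eq_left (by linarith), max_eq_left (by linarith)]

theorem abs_Gres_apply_le_abs_gvec_apply (hlam : 0 ≤ lam) (ht : 0 < t) (x : E n) (i : Fin n) :
    |Gres n f lam t x i| ≤ |gvec n f lam x i| := by
  have hab : gradient f x i - lam ≤ gradient f x i + lam := by linarith
  rw [Gres_apply_eq_max_min f hlam ht]
  rcases lt_trichotomy (x i) 0 with hx | hx | hx
  · have hg : gvec n f lam x i = gradient f x i - lam := by
      simp [gvec, hx, hx.not_gt]
    rw [hg]
    exact abs_max_min_le_abs_left (mul_neg_of_pos_of_neg ht hx).le hab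
  · rw [gvec_apply_of_eq_zero f hlam x i hx, hx, mul_zero]
  · have hg : gvec n f lam x i = gradient f x i + lam := by
      simp [gvec, hx]
    rw [hg]
    exact abs_max_min_le_abs_right (mul_pos ht hx).le hab

end Coordinates

theorem stmt3_general {n : ℕ} (f : E n → ℝ) (lam : ℝ) (hlam : 0 < lam) :
    ∀ x : E n, ∀ t : ℝ, 0 < t →
      (∀ i, |Gres n f lam t x i| ≤ |gvec n f lam x i|) ∧
        ‖Gres n f lam t x‖ ≤ ‖gvec n f lam x‖ := by
  intro x t ht
  have hcoord : ∀ i, |Gres n f lam t x i| ≤ |gvec n f lam x i| := fun i =>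
    abs_Gres_apply_le_abs_gvec_apply f hlam.le ht x i
  exact ⟨hcoord, EuclideanSpace.norm_le_norm_of_forall_norm_le fun i => by
    simpa only [Real.norm_eq_abs] using hcoord i⟩

/-- Componentwise, `|G_t(x)_i| ≤ |g(x)_i|` for every `t > 0`; consequently
`‖G_t(x)‖ ≤ ‖g(x)‖`. -/
theorem stmt3 {n : ℕ} (f : E n → ℝ) (hf : Differentiable ℝ f) (lam : ℝ) (hlam : 0 < lam) :
    ∀ x : E n, ∀ t : ℝ, 0 < t →
      (∀ i, |Gres n f lam t x i| ≤ |gvec n f lam x i|) ∧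
        ‖Gres n f lam t x‖ ≤ ‖gvec n f lam x‖ :=
  stmt3_general f lam hlam
end
end

section
/- Assume f has an L_g-quadratic upper bound with L_g > 0, and let η̄ ∈ (0,1), β > 1, ε ∈ (0,1). Let x ∈ ℝⁿ with g(x) ≠ 0. Then there exists a smallest nonnegative integer j* such that φ(P_{β^{j*}}(x)) < φ(x) − (η̄/β^{j*})·‖G_{β^{j*}}(x)‖², this j* satisfies β^{j*} ≤ max{βL_g/(2 − 2η̄), 1}, and, if moreover ‖G_{β^{j*}}(x)‖ > ε, then φ(x) − φ(P_{β^{j*}}(x)) > (η̄ / max{βL_g/(2 − 2η̄), 1})·ε². -/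
open scoped RealInnerProductSpace

noncomputable section

/-! Soft-thresholding is the proximal map of `κ|·|`, so the step `P_t(x)` satisfies the
three-point inequality `λ‖P‖₁ + ⟪∇f(x), P - x⟫ + t‖P - x‖² ≤ λ‖x‖₁`. Together with the quadratic
upper bound this gives `φ(P_t(x)) ≤ φ(x) - (t - L_g/2)‖P_t(x) - x‖²`, and since
`G_t(x) = t (x - P_t(x))` the Armijo test `φ(P_t(x)) < φ(x) - (η̄/t)‖G_t(x)‖²` passes as soon as
`(2 - 2η̄) t > L_g`; it is strict because `g(x) ≠ 0` forces `G_t(x) ≠ 0`. Hence the backtracking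
search over `t = β^j` stops, and the first accepted `β^j` overshoots the threshold
`L_g/(2 - 2η̄)` by at most one factor `β`, which bounds both `β^{j*}` and, for `‖G‖ > ε`, the
decrease from below. -/

def softThreshold (κ z : ℝ) : ℝ :=
  if κ < z then z - κ else if z < -κ then z + κ else 0

lemma Pt_apply (n : ℕ) (f : E n → ℝ) (lam t : ℝ) (x : E n) (i : Fin n) :
    Pt n f lam t x i = softThreshold (lam / t) (x i - gradient f x i / t) := rfl

lemma softThreshold_three_point {κ : ℝ} (hκ : 0 ≤ κ) (y z : ℝ) :
    κ * |softThreshold κ z| + (y - z) * (softThreshold κ z - y) + (softThreshold κ z - y) ^ 2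
      ≤ κ * |y| := by
  unfold softThreshold
  split_ifs with hpos hneg
  · rw [abs_of_pos (by linarith)]
    nlinarith [mul_le_mul_of_nonneg_left (le_abs_self y) hκ]
  · rw [abs_of_neg (by linarith)]
    nlinarith [mul_le_mul_of_nonneg_left (neg_abs_le y) hκ]
  · rw [abs_zero]
    have hz : |z| ≤ κ := abs_le.mpr ⟨by linarith, by linarith⟩
    nlinarith [le_abs_self (z * y), abs_mul z y, mul_le_mul_of_nonneg_right hz (abs_nonneg y)]

lemma Pt_three_point {n : ℕ} (f : E n → ℝ) {lam t : ℝ} (hlam : 0 ≤ lam) (ht : 0 < t)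
    (x : E n) :
    lam * ∑ i, |Pt n f lam t x i| + ⟪gradient f x, Pt n f lam t x - x⟫
        + t * ‖Pt n f lam t x - x‖ ^ 2 ≤ lam * ∑ i, |x i| := by
  simp only [EuclideanSpace.real_norm_sq_eq, PiLp.inner_apply, Finset.mul_sum,
    ← Finset.sum_add_distrib]
  refine Finset.sum_le_sum fun i _ => ?_
  have key := mul_le_mul_of_nonneg_left
    (softThreshold_three_point (div_nonneg hlam ht.le) (x i) (x i - gradient f x i / t)) ht.le
  simp only [PiLp.sub_apply, RCLike.inner_apply, conj_trivial, Pt_apply]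
  convert key using 1
  · field_simp
    ring
  · field_simp

lemma phi_Pt_le {n : ℕ} (f : E n → ℝ) {lam t L : ℝ} (hlam : 0 ≤ lam) (ht : 0 < t) (x : E n)
    (hquad : ∀ y : E n, f y ≤ f x + ⟪gradient f x, y - x⟫ + L / 2 * ‖y - x‖ ^ 2) :
    phi n f lam (Pt n f lam t x) ≤ phi n f lam x - (t - L / 2) * ‖Pt n f lam t x - x‖ ^ 2 := by
  have hP := Pt_three_point f hlam ht x
  have hf := hquad (Pt n f lam t x)
  simp only [phi]
  linarith

lemma Gres_eq_smul (n : ℕ) (f : E n → ℝ) (lam : ℝ) {t : ℝ} (ht : t ≠ 0) (x : E n) :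
    Gres n f lam t x = t • (x - Pt n f lam t x) := by
  ext i
  have hup : lam / t < x i - gradient f x i / t ↔ (gradient f x i + lam) / t < x i := by
    rw [add_div]; constructor <;> intro h <;> linarith
  have hlow : x i - gradient f x i / t < -(lam / t) ↔ x i < (gradient f x i - lam) / t := by
    rw [sub_div]; constructor <;> intro h <;> linarith
  simp only [Gres, Pt, PiLp.smul_apply, PiLp.sub_apply, smul_eq_mul, hup, hlow]
  split_ifs <;> field_simp <;> ring

lemma gvec_eq_zero_of_Gres_eq_zero (n : ℕ) (f : E n → ℝ) (lam : ℝ) {t : ℝ} (ht : 0 < t)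
    (x : E n) (hG : Gres n f lam t x = 0) : gvec n f lam x = 0 := by
  ext i
  have hGi : Gres n f lam t x i = 0 := by rw [hG]; rfl
  simp only [Gres] at hGi
  simp only [gvec, PiLp.zero_apply]
  split_ifs at hGi with hup hlow
  · rw [hGi, zero_div] at hup
    rw [if_pos hup, hGi]
  · rw [hGi, zero_div] at hlow
    rw [if_neg hlow.not_gt, if_pos hlow, hGi]
  · have hx0 : x i = 0 := (mul_eq_zero.mp hGi).resolve_left ht.ne'
    rw [hx0, not_lt, le_div_iff₀ ht, zero_mul] at hup
    rw [hx0, not_lt, div_le_iff₀ ht, zero_mul] at hlow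
    rw [hx0, if_neg (lt_irrefl 0), if_neg (lt_irrefl 0), max_eq_right (by linarith),
      min_eq_left (by linarith), sub_self]

lemma phi_Pt_lt_armijo {n : ℕ} (f : E n → ℝ) {lam t L η : ℝ} (hlam : 0 ≤ lam) (ht : 0 < t)
    (x : E n) (hquad : ∀ y : E n, f y ≤ f x + ⟪gradient f x, y - x⟫ + L / 2 * ‖y - x‖ ^ 2)
    (hG : Gres n f lam t x ≠ 0) (htL : L < (2 - 2 * η) * t) :
    phi n f lam (Pt n f lam t x) < phi n f lam x - η / t * ‖Gres n f lam t x‖ ^ 2 := by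
  have hG_eq := Gres_eq_smul n f lam ht.ne' x
  have hstep : 0 < ‖Pt n f lam t x - x‖ ^ 2 := by
    refine pow_pos (norm_pos_iff.mpr fun h => hG ?_) 2
    rw [hG_eq, ← neg_sub, h, neg_zero, smul_zero]
  have hGd : η / t * ‖Gres n f lam t x‖ ^ 2 = η * t * ‖Pt n f lam t x - x‖ ^ 2 := by
    rw [hG_eq, norm_smul, norm_sub_rev, Real.norm_of_nonneg ht.le]
    field_simp
  have hdec := phi_Pt_le f hlam ht x hquad (L := L)
  rw [hGd]
  nlinarith [mul_lt_mul_of_pos_right htL hstep]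

lemma pow_find_le_max_mul {p : ℕ → Prop} [DecidablePred p] {β T : ℝ} (hβ : 0 ≤ β)
    (hp : ∀ k, T < β ^ k → p k) (h : ∃ j, p j) : β ^ Nat.find h ≤ max (β * T) 1 := by
  rcases hfind : Nat.find h with _ | k
  · exact pow_zero β ▸ le_max_right _ _
  · have hk : β ^ k ≤ T := not_lt.mp fun hT => Nat.find_min h (by omega) (hp k hT)
    calc β ^ (k + 1) = β * β ^ k := pow_succ' β k
      _ ≤ β * T := mul_le_mul_of_nonneg_left hk hβ
      _ ≤ max (β * T) 1 := le_max_left _ _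

theorem stmt5_general {n : ℕ} (f : E n → ℝ) (lam : ℝ) (hlam : 0 < lam)
    (Lg : ℝ)
    (hquad : ∀ x y : E n, ∀ L : ℝ, Lg ≤ L →
      f y ≤ f x + ⟪gradient f x, y - x⟫ + L / 2 * ‖y - x‖ ^ 2)
    (ηb β ε : ℝ) (hη : ηb ∈ Set.Ioo (0:ℝ) 1) (hβ : 1 < β) (hε : ε ∈ Set.Ioo (0:ℝ) 1)
    (x : E n) (hx : gvec n f lam x ≠ 0) :
    ∃ j : ℕ,
      (phi n f lam (Pt n f lam (β ^ j) x) <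
          phi n f lam x - ηb / β ^ j * ‖Gres n f lam (β ^ j) x‖ ^ 2) ∧
      (∀ j' < j, ¬(phi n f lam (Pt n f lam (β ^ j') x) <
          phi n f lam x - ηb / β ^ j' * ‖Gres n f lam (β ^ j') x‖ ^ 2)) ∧
      β ^ j ≤ max (β * Lg / (2 - 2 * ηb)) 1 ∧
      (ε < ‖Gres n f lam (β ^ j) x‖ →
        ηb / max (β * Lg / (2 - 2 * ηb)) 1 * ε ^ 2 <
          phi n f lam x - phi n f lam (Pt n f lam (β ^ j) x)) := by
  classical
  have hβ0 : 0 < β := by linarith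
  have hacc : ∀ k : ℕ, Lg / (2 - 2 * ηb) < β ^ k → phi n f lam (Pt n f lam (β ^ k) x) <
      phi n f lam x - ηb / β ^ k * ‖Gres n f lam (β ^ k) x‖ ^ 2 := fun k hk =>
    phi_Pt_lt_armijo f hlam.le (pow_pos hβ0 k) x (fun y => hquad x y Lg le_rfl)
      (fun hG => hx (gvec_eq_zero_of_Gres_eq_zero n f lam (pow_pos hβ0 k) x hG))
      ((div_lt_iff₀' (by linarith [hη.2])).mp hk)
  have hex := (pow_unbounded_of_one_lt _ hβ).imp hacc
  have hbound := mul_div_assoc β Lg _ ▸ pow_find_le_max_mul hβ0.le hacc hex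
  refine ⟨Nat.find hex, Nat.find_spec hex, fun j hj => Nat.find_min hex hj, hbound, fun hGε => ?_⟩
  calc ηb / max (β * Lg / (2 - 2 * ηb)) 1 * ε ^ 2
      ≤ ηb / β ^ Nat.find hex * ε ^ 2 := by gcongr; exact hη.1.le
    _ < ηb / β ^ Nat.find hex * ‖Gres n f lam (β ^ Nat.find hex) x‖ ^ 2 := by
      gcongr
      · exact div_pos hη.1 (pow_pos hβ0 _)
      · exact hε.1.le
    _ < phi n f lam x - phi n f lam (Pt n f lam (β ^ Nat.find hex) x) := by
      linarith [Nat.find_spec hex]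

/-- The backtracking proximal-gradient line search terminates at a smallest
index `j*`, the accepted stepsize parameter satisfies `β^{j*} ≤ max{βL_g/(2-2η̄), 1}`, and if
the accepted residual exceeds `ε` then the objective decreases by more than
`(η̄ / max{βL_g/(2-2η̄), 1}) ε²`. -/
theorem stmt5 {n : ℕ} (f : E n → ℝ) (hf : Differentiable ℝ f) (lam : ℝ) (hlam : 0 < lam)
    (Lg : ℝ) (hLg : 0 < Lg)
    (hquad : ∀ x y : E n, ∀ L : ℝ, Lg ≤ L →
      f y ≤ f x + ⟪gradient f x, y - x⟫ + L / 2 * ‖y - x‖ ^ 2)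
    (ηb β ε : ℝ) (hη : ηb ∈ Set.Ioo (0:ℝ) 1) (hβ : 1 < β) (hε : ε ∈ Set.Ioo (0:ℝ) 1)
    (x : E n) (hx : gvec n f lam x ≠ 0) :
    ∃ j : ℕ,
      (phi n f lam (Pt n f lam (β ^ j) x) <
          phi n f lam x - ηb / β ^ j * ‖Gres n f lam (β ^ j) x‖ ^ 2) ∧
      (∀ j' < j, ¬(phi n f lam (Pt n f lam (β ^ j') x) <
          phi n f lam x - ηb / β ^ j' * ‖Gres n f lam (β ^ j') x‖ ^ 2)) ∧
      β ^ j ≤ max (β * Lg / (2 - 2 * ηb)) 1 ∧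
      (ε < ‖Gres n f lam (β ^ j) x‖ →
        ηb / max (β * Lg / (2 - 2 * ηb)) 1 * ε ^ 2 <
          phi n f lam x - phi n f lam (Pt n f lam (β ^ j) x)) :=
  stmt5_general f lam hlam Lg hquad ηb β ε hη hβ hε x hx
end
end

section
/- Assume f is twice differentiable and satisfies the cubic upper bound with constant L_H > 0, and let ε ∈ (0,1]. Let x ∈ ℝⁿ and let d ∈ ℝⁿ satisfy d_i = 0 whenever x_i = 0. Define J₊ = {i : x_i > √ε and d_i < 0}, J₋ = {i : x_i < −√ε and d_i > 0}, J₀ = {i : 0 < |x_i| ≤ √ε and d_i < 0}, and set t₊ = min_{i∈J₊}(−x_i/d_i), t₋ = min_{i∈J₋}(−x_i/d_i), t₀ = min_{i∈J₀}(−1/d_i), each taken as +∞ when the corresponding set is empty. Then for every t ∈ (0, min{t₊, t₋, t₀}]: φ(x + t·S_{x,ε}d) ≤ φ(x) + t·⟨g(x), S_{x,ε}d⟩ + (t²/2)·⟨S_{x,ε}d, ∇²f(x)·S_{x,ε}d⟩ + (L_H/6)·t³·‖d‖³. -/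
open scoped RealInnerProductSpace

noncomputable section

/-!
For `t` up to the breakpoints no coordinate of `x + t S_{x,ε} d` changes sign, so on the ray the
`ℓ¹` term is affine with slope `⟨g(x) - ∇f(x), S_{x,ε} d⟩`. The cubic upper bound along the ray
then gives the estimate, with `‖S_{x,ε} d‖ ≤ ‖d‖` because `|x_i| ≤ √ε ≤ 1` on the rescaled
coordinates.
-/

lemma cubic_upper_bound_add_smul {F : Type*} [NormedAddCommGroup F] [InnerProductSpace ℝ F]
    (f : F → ℝ) (g : F) (H : F →L[ℝ] F) (LH : ℝ) (x s : F) {t : ℝ} (ht : 0 ≤ t)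
    (hcubic : ∀ y, f y ≤ f x + ⟪g, y - x⟫ + 1 / 2 * ⟪y - x, H (y - x)⟫ + LH / 6 * ‖y - x‖ ^ 3) :
    f (x + t • s) ≤ f x + t * ⟪g, s⟫ + t ^ 2 / 2 * ⟪s, H s⟫ + LH / 6 * t ^ 3 * ‖s‖ ^ 3 := by
  have h := hcubic (x + t • s)
  rw [add_sub_cancel_left, real_inner_smul_right, H.map_smul, real_inner_smul_left,
    real_inner_smul_right, norm_smul, Real.norm_of_nonneg ht] at h
  linarith

lemma add_mul_nonneg_of_le_neg_div {a t δ : ℝ} (ha : 0 ≤ a) (ht : 0 ≤ t)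
    (h : δ < 0 → t ≤ -a / δ) : 0 ≤ a + t * δ := by
  rcases le_or_gt 0 δ with hδ | hδ
  · linarith [mul_nonneg ht hδ]
  · linarith [(le_div_iff_of_neg hδ).1 (h hδ)]

section Smap

variable {n : ℕ} {x d : E n} {ε t : ℝ}

lemma abs_smap_apply_le (hε : ε ≤ 1) (u : E n) (i : Fin n) : |Smap n x ε u i| ≤ |u i| := by
  simp only [Smap, PiLp.toLp_apply]
  split_ifs with h
  · exact le_rfl
  · have hx : |x i| ≤ 1 := (not_lt.1 h).trans (Real.sqrt_le_one.2 hε)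
    rw [abs_mul]
    exact mul_le_of_le_one_left (abs_nonneg _) hx

lemma norm_smap_le (hε : ε ≤ 1) (u : E n) : ‖Smap n x ε u‖ ≤ ‖u‖ := by
  rw [EuclideanSpace.norm_eq, EuclideanSpace.norm_eq]
  gcongr with i
  simp only [Real.norm_eq_abs]
  exact abs_smap_apply_le hε u i

lemma smap_apply_of_eq_zero {i : Fin n} (hx : x i = 0) (u : E n) : Smap n x ε u i = 0 := by
  simp [Smap, hx, Real.sqrt_nonneg]

lemma add_mul_smap_apply_nonneg (ht : 0 ≤ t) {i : Fin n} (hx : 0 < x i)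
    (htp : ∀ i, Real.sqrt ε < x i → d i < 0 → t ≤ -x i / d i)
    (ht0 : ∀ i, 0 < |x i| → |x i| ≤ Real.sqrt ε → d i < 0 → t ≤ -1 / d i) :
    0 ≤ x i + t * Smap n x ε d i := by
  simp only [Smap, PiLp.toLp_apply]
  split_ifs with h
  · exact add_mul_nonneg_of_le_neg_div hx.le ht (htp i (abs_of_pos hx ▸ h))
  · have h1 : 0 ≤ 1 + t * d i :=
      add_mul_nonneg_of_le_neg_div zero_le_one ht (ht0 i (abs_pos.2 hx.ne') (not_lt.1 h))
    calc 0 ≤ x i * (1 + t * d i) := mul_nonneg hx.le h1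
      _ = x i + t * (x i * d i) := by ring

lemma add_mul_smap_apply_nonpos (ht : 0 ≤ t) {i : Fin n} (hx : x i < 0)
    (htm : ∀ i, x i < -Real.sqrt ε → 0 < d i → t ≤ -x i / d i)
    (ht0 : ∀ i, 0 < |x i| → |x i| ≤ Real.sqrt ε → d i < 0 → t ≤ -1 / d i) :
    x i + t * Smap n x ε d i ≤ 0 := by
  simp only [Smap, PiLp.toLp_apply]
  split_ifs with h
  · have hx' : x i < -Real.sqrt ε := by rw [abs_of_neg hx] at h; linarith
    have h1 : 0 ≤ -x i + t * -d i := add_mul_nonneg_of_le_neg_div (neg_nonneg.2 hx.le) ht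
      fun hd => neg_div_neg_eq (-x i) (d i) ▸ htm i hx' (neg_neg_iff_pos.1 hd)
    linarith
  · have h1 : 0 ≤ 1 + t * d i :=
      add_mul_nonneg_of_le_neg_div zero_le_one ht (ht0 i (abs_pos.2 hx.ne) (not_lt.1 h))
    calc x i + t * (x i * d i) = x i * (1 + t * d i) := by ring
      _ ≤ 0 := mul_nonpos_of_nonpos_of_nonneg hx.le h1

lemma mul_abs_add_mul_smap_apply (f : E n → ℝ) (lam : ℝ) (ht : 0 ≤ t)
    (htp : ∀ i, Real.sqrt ε < x i → d i < 0 → t ≤ -x i / d i)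
    (htm : ∀ i, x i < -Real.sqrt ε → 0 < d i → t ≤ -x i / d i)
    (ht0 : ∀ i, 0 < |x i| → |x i| ≤ Real.sqrt ε → d i < 0 → t ≤ -1 / d i) (i : Fin n) :
    lam * |x i + t * Smap n x ε d i| =
      lam * |x i| + t * ((gvec n f lam x i - gradient f x i) * Smap n x ε d i) := by
  rcases lt_trichotomy (x i) 0 with hx | hx | hx
  · rw [abs_of_nonpos (add_mul_smap_apply_nonpos ht hx htm ht0), abs_of_neg hx]
    simp only [gvec, PiLp.toLp_apply, hx, hx.not_gt, if_false, if_true]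
    ring
  · simp [smap_apply_of_eq_zero hx]
  · rw [abs_of_nonneg (add_mul_smap_apply_nonneg ht hx htp ht0), abs_of_pos hx]
    simp only [gvec, PiLp.toLp_apply, hx, if_true]
    ring

lemma phi_add_smul_smap (f : E n → ℝ) (lam : ℝ) (ht : 0 ≤ t)
    (htp : ∀ i, Real.sqrt ε < x i → d i < 0 → t ≤ -x i / d i)
    (htm : ∀ i, x i < -Real.sqrt ε → 0 < d i → t ≤ -x i / d i)
    (ht0 : ∀ i, 0 < |x i| → |x i| ≤ Real.sqrt ε → d i < 0 → t ≤ -1 / d i) :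
    phi n f lam (x + t • Smap n x ε d) = f (x + t • Smap n x ε d) + lam * ∑ i, |x i| +
      t * ⟪gvec n f lam x - gradient f x, Smap n x ε d⟫ := by
  simp only [phi, PiLp.add_apply, PiLp.smul_apply, smul_eq_mul, Finset.mul_sum,
    mul_abs_add_mul_smap_apply f lam ht htp htm ht0, Finset.sum_add_distrib, PiLp.inner_apply,
    PiLp.sub_apply, RCLike.inner_apply, conj_trivial]
  rw [add_assoc]
  congr 2
  exact Finset.sum_congr rfl fun i _ => by ring

end Smap

theorem stmt7_general {n : ℕ} (f : E n → ℝ) (lam : ℝ)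
    (LH : ℝ) (hLH : 0 < LH)
    (hcubic : ∀ x y : E n, f y ≤ f x + ⟪gradient f x, y - x⟫ +
      1 / 2 * ⟪y - x, hess n f x (y - x)⟫ + LH / 6 * ‖y - x‖ ^ 3)
    (ε : ℝ) (hε : ε ∈ Set.Ioc (0:ℝ) 1)
    (x d : E n)
    (t : ℝ) (ht : 0 < t)
    (htp : ∀ i, Real.sqrt ε < x i → d i < 0 → t ≤ -x i / d i)
    (htm : ∀ i, x i < -Real.sqrt ε → 0 < d i → t ≤ -x i / d i)
    (ht0 : ∀ i, 0 < |x i| → |x i| ≤ Real.sqrt ε → d i < 0 → t ≤ -1 / d i) :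
    phi n f lam (x + t • Smap n x ε d) ≤
      phi n f lam x + t * ⟪gvec n f lam x, Smap n x ε d⟫ +
        t ^ 2 / 2 * ⟪Smap n x ε d, hess n f x (Smap n x ε d)⟫ +
        LH / 6 * t ^ 3 * ‖d‖ ^ 3 := by
  set s := Smap n x ε d
  have hf := cubic_upper_bound_add_smul f (gradient f x) (hess n f x) LH x s ht.le (hcubic x)
  have hs : LH / 6 * t ^ 3 * ‖s‖ ^ 3 ≤ LH / 6 * t ^ 3 * ‖d‖ ^ 3 := by
    gcongr
    exact norm_smap_le hε.2 d
  rw [phi_add_smul_smap f lam ht.le htp htm ht0, phi, inner_sub_left]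
  linarith

/-- Descent-type upper bound on `φ(x + t S_{x,ε} d)` along a scaled direction
`d` (vanishing on the zero coordinates of `x`) for stepsizes `t` not exceeding the breakpoints
`t₊, t₋, t₀`. -/
theorem stmt7 {n : ℕ} (f : E n → ℝ) (hf1 : Differentiable ℝ f)
    (hf2 : Differentiable ℝ (gradient f)) (lam : ℝ) (hlam : 0 < lam)
    (LH : ℝ) (hLH : 0 < LH)
    (hcubic : ∀ x y : E n, f y ≤ f x + ⟪gradient f x, y - x⟫ +
      1 / 2 * ⟪y - x, hess n f x (y - x)⟫ + LH / 6 * ‖y - x‖ ^ 3)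
    (ε : ℝ) (hε : ε ∈ Set.Ioc (0:ℝ) 1)
    (x d : E n) (hd : ∀ i, x i = 0 → d i = 0)
    (t : ℝ) (ht : 0 < t)
    (htp : ∀ i, Real.sqrt ε < x i → d i < 0 → t ≤ -x i / d i)
    (htm : ∀ i, x i < -Real.sqrt ε → 0 < d i → t ≤ -x i / d i)
    (ht0 : ∀ i, 0 < |x i| → |x i| ≤ Real.sqrt ε → d i < 0 → t ≤ -1 / d i) :
    phi n f lam (x + t • Smap n x ε d) ≤
      phi n f lam x + t * ⟪gvec n f lam x, Smap n x ε d⟫ +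
        t ^ 2 / 2 * ⟪Smap n x ε d, hess n f x (Smap n x ε d)⟫ +
        LH / 6 * t ^ 3 * ‖d‖ ^ 3 :=
  stmt7_general f lam LH hLH hcubic ε hε x d t ht htp htm ht0
end
end

section
/- Assume f is twice differentiable and satisfies the cubic upper bound with constant L_H > 0. Let ε_g, ε_h ∈ (0,1), η ∈ (0, 1/2), θ ∈ (0,1), and x ∈ ℝⁿ. Let u ∈ ℝⁿ with ‖u‖ = 1 and u_i = 0 whenever x_i = 0, and suppose ρ := ⟨S_{x,ε_g}u, ∇²f(x)·S_{x,ε_g}u⟩ ≤ −ε_h/2. Set σ = 1 if ⟨g(x), S_{x,ε_g}u⟩ ≥ 0 and σ = −1 otherwise, and d = −σ·|ρ|·u. Then there exists a smallest nonnegative integer j* such that φ(x + θ^{j*}·S_{x,ε_g}d) < φ(x) − η·θ^{2j*}·‖d‖³, and φ(x) − φ(x + θ^{j*}·S_{x,ε_g}d) > (η·θ²/8)·min{1, 9(1 − 2η)²/L_H²}·min{ε_g·ε_h, ε_h³}. -/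
/-!
While `α‖d‖ ≤ √ε_g`, the point `x + α S_{x,ε_g} d` stays in the closed orthant face of `x`:
coordinates with `|x_i| > √ε_g` move by less than `|x_i|`, and the others are multiplied by
`1 + α d_i ≥ 0`. On that face `λ‖·‖₁` is affine with slope `g(x) - ∇f(x)`, so the cubic upper
bound for `f` becomes a cubic model for `φ` with slope `⟨g(x), s⟩ ≤ 0` (this is the choice of `σ`)
and curvature `⟨s, ∇²f(x) s⟩ = ρ³ = -‖d‖³`. Hence the Armijo test succeeds as soon as
`θ^j < min(√ε_g / ‖d‖, 3(1 - 2η)/L_H)`, the first success has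
`θ^j ≥ θ min(1, √ε_g / ‖d‖, 3(1 - 2η)/L_H)`, and `‖d‖ = |ρ| ≥ ε_h / 2` turns the decrease
`η θ^{2j} ‖d‖³` into the stated bound.
-/

open scoped RealInnerProductSpace

noncomputable section

lemma EuclideanSpace.norm_le_norm_of_forall_abs_le {ι : Type*} [Fintype ι]
    {a b : EuclideanSpace ℝ ι} (h : ∀ i, |a i| ≤ |b i|) : ‖a‖ ≤ ‖b‖ := by
  have hsq : ‖a‖ ^ 2 ≤ ‖b‖ ^ 2 := by
    simp only [EuclideanSpace.real_norm_sq_eq]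
    exact Finset.sum_le_sum fun i _ => sq_le_sq.mpr (h i)
  exact (pow_le_pow_iff_left₀ (norm_nonneg a) (norm_nonneg b) two_ne_zero).mp hsq

lemma EuclideanSpace.real_inner_eq_sum {ι : Type*} [Fintype ι] (a b : EuclideanSpace ℝ ι) :
    ⟪a, b⟫ = ∑ i, a i * b i := by
  simp only [PiLp.inner_apply, RCLike.inner_apply, conj_trivial, mul_comm]

section Smap

variable {n : ℕ} (x : E n) {eps : ℝ}

lemma Smap_smul (c : ℝ) (u : E n) : Smap n x eps (c • u) = c • Smap n x eps u := by
  ext i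
  simp only [Smap, PiLp.smul_apply, smul_eq_mul]
  split_ifs <;> ring

lemma Smap_apply_eq_zero (u : E n) {i : Fin n} (hx : x i = 0) : Smap n x eps u i = 0 := by
  simp [Smap, hx, Real.sqrt_nonneg]

lemma abs_Smap_apply_le (heps : eps ≤ 1) (u : E n) (i : Fin n) :
    |Smap n x eps u i| ≤ |u i| := by
  simp only [Smap]
  split_ifs with h
  · exact le_rfl
  · have hx : |x i| ≤ 1 := (not_lt.mp h).trans (Real.sqrt_le_one.mpr heps)
    rw [abs_mul]
    exact mul_le_of_le_one_left (abs_nonneg _) hx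

lemma norm_Smap_le (heps : eps ≤ 1) (u : E n) : ‖Smap n x eps u‖ ≤ ‖u‖ :=
  EuclideanSpace.norm_le_norm_of_forall_abs_le (abs_Smap_apply_le x heps u)

lemma mul_add_Smap_apply_nonneg (heps : eps ≤ 1) {u : E n} (hu : ‖u‖ ≤ √eps) (i : Fin n) :
    0 ≤ x i * (x i + Smap n x eps u i) := by
  have hui : |u i| ≤ √eps := (PiLp.norm_apply_le u i).trans hu
  simp only [Smap]
  split_ifs with h
  · have hxu : |x i| * |u i| ≤ |x i| * |x i| :=
      mul_le_mul_of_nonneg_left (hui.trans h.le) (abs_nonneg _)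
    nlinarith [abs_mul_abs_self (x i), abs_mul (x i) (u i), neg_abs_le (x i * u i)]
  · have : |u i| ≤ 1 := hui.trans (Real.sqrt_le_one.mpr heps)
    nlinarith [mul_self_nonneg (x i), neg_abs_le (u i)]

end Smap

lemma mul_abs_add_add_gradient_mul_eq {n : ℕ} (f : E n → ℝ) (lam : ℝ) {x t : E n} {i : Fin n}
    (hsign : 0 ≤ x i * (x i + t i)) (hzero : x i = 0 → t i = 0) :
    lam * |x i + t i| + gradient f x i * t i = lam * |x i| + gvec n f lam x i * t i := by
  rcases lt_trichotomy (x i) 0 with hx | hx | hx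
  · have hxt : x i + t i ≤ 0 := nonpos_of_mul_nonneg_right hsign hx
    simp only [gvec, if_neg hx.not_gt, if_pos hx, abs_of_nonpos hxt, abs_of_neg hx]
    ring
  · simp [hzero hx, hx]
  · have hxt : 0 ≤ x i + t i := nonneg_of_mul_nonneg_right hsign hx
    simp only [gvec, if_pos hx, abs_of_nonneg hxt, abs_of_pos hx]
    ring

lemma phi_add_le {n : ℕ} {f : E n → ℝ} {LH : ℝ}
    (hcubic : ∀ x y : E n, f y ≤ f x + ⟪gradient f x, y - x⟫ +
      1 / 2 * ⟪y - x, hess n f x (y - x)⟫ + LH / 6 * ‖y - x‖ ^ 3)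
    (lam : ℝ) {x t : E n} (hsign : ∀ i, 0 ≤ x i * (x i + t i)) (hzero : ∀ i, x i = 0 → t i = 0) :
    phi n f lam (x + t) ≤ phi n f lam x + ⟪gvec n f lam x, t⟫ +
      1 / 2 * ⟪t, hess n f x t⟫ + LH / 6 * ‖t‖ ^ 3 := by
  have hl1 : lam * ∑ i, |(x + t) i| + ⟪gradient f x, t⟫ =
      lam * ∑ i, |x i| + ⟪gvec n f lam x, t⟫ := by
    simp only [EuclideanSpace.real_inner_eq_sum, Finset.mul_sum, ← Finset.sum_add_distrib,
      PiLp.add_apply]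
    exact Finset.sum_congr rfl fun i _ =>
      mul_abs_add_add_gradient_mul_eq f lam (hsign i) (hzero i)
  have hf := hcubic x (x + t)
  rw [add_sub_cancel_left] at hf
  simp only [phi]
  linarith

lemma cubic_model_lt {α r LH η a : ℝ} (hα : 0 < α) (hr : 0 < r) (hLH : 0 < LH) (ha : a ≤ 0)
    (hαLH : α < 3 * (1 - 2 * η) / LH) :
    α * a - 1 / 2 * α ^ 2 * r + LH / 6 * α ^ 3 * r < -(η * α ^ 2 * r) := by
  have hαLH' : α * LH < 3 * (1 - 2 * η) := (lt_div_iff₀ hLH).mp hαLH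
  nlinarith [mul_nonpos_of_nonneg_of_nonpos hα.le ha, mul_pos (pow_pos hα 2) hr]

lemma phi_add_smul_Smap_lt {n : ℕ} {f : E n → ℝ} {LH : ℝ} (hLH : 0 < LH)
    (hcubic : ∀ x y : E n, f y ≤ f x + ⟪gradient f x, y - x⟫ +
      1 / 2 * ⟪y - x, hess n f x (y - x)⟫ + LH / 6 * ‖y - x‖ ^ 3)
    (lam : ℝ) {εg η α : ℝ} (hεg : εg ≤ 1) {x d : E n} (hd : d ≠ 0)
    (hdesc : ⟪gvec n f lam x, Smap n x εg d⟫ ≤ 0)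
    (hcurv : ⟪Smap n x εg d, hess n f x (Smap n x εg d)⟫ = -‖d‖ ^ 3)
    (hα : 0 < α) (hαd : α * ‖d‖ ≤ √εg) (hαLH : α < 3 * (1 - 2 * η) / LH) :
    phi n f lam (x + α • Smap n x εg d) < phi n f lam x - η * α ^ 2 * ‖d‖ ^ 3 := by
  set s := Smap n x εg d
  have hsign : ∀ i, 0 ≤ x i * (x i + (α • s) i) := by
    rw [← Smap_smul]
    refine mul_add_Smap_apply_nonneg x hεg ?_
    rwa [norm_smul, Real.norm_of_nonneg hα.le]
  have hzero : ∀ i, x i = 0 → (α • s) i = 0 := fun i hx => by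
    rw [← Smap_smul]
    exact Smap_apply_eq_zero x _ hx
  have hcube : ‖α • s‖ ^ 3 ≤ α ^ 3 * ‖d‖ ^ 3 := by
    rw [norm_smul, Real.norm_of_nonneg hα.le, mul_pow]
    gcongr
    exact norm_Smap_le x hεg d
  have hmodel := phi_add_le hcubic lam hsign hzero
  rw [map_smul, real_inner_smul_left, real_inner_smul_right, real_inner_smul_right, hcurv]
    at hmodel
  have := cubic_model_lt hα (pow_pos (norm_pos_iff.mpr hd) 3) hLH hdesc hαLH
  nlinarith

lemma inner_neg_smul_nonpos_of_sign {F : Type*} [NormedAddCommGroup F] [InnerProductSpace ℝ F]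
    {g v : F} {c σ : ℝ} (hc : 0 ≤ c) (hσ : σ = if 0 ≤ ⟪g, v⟫ then 1 else -1) :
    ⟪g, -(σ * c) • v⟫ ≤ 0 := by
  rw [real_inner_smul_right, hσ]
  split_ifs with h <;> nlinarith

lemma exists_least_of_forall_pow_lt {θ c : ℝ} (hθ : θ ∈ Set.Ioo (0 : ℝ) 1) (hc : 0 < c)
    {P : ℕ → Prop} (hP : ∀ j, θ ^ j < c → P j) :
    ∃ j, P j ∧ (∀ j' < j, ¬P j') ∧ θ * min 1 c ≤ θ ^ j := by
  classical
  have hex : ∃ j, P j :=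
    let ⟨j, hj⟩ := exists_pow_lt_of_lt_one hc hθ.2
    ⟨j, hP j hj⟩
  refine ⟨Nat.find hex, Nat.find_spec hex, fun j hj => Nat.find_min hex hj, ?_⟩
  rcases h : Nat.find hex with _ | k
  · simpa using (mul_le_of_le_one_right hθ.1.le (min_le_left 1 c)).trans hθ.2.le
  · have hk : c ≤ θ ^ k := not_lt.mp fun hlt =>
      Nat.find_min hex (h ▸ k.lt_succ_self) (hP k hlt)
    calc θ * min 1 c ≤ θ * θ ^ k :=
          mul_le_mul_of_nonneg_left ((min_le_right 1 c).trans hk) hθ.1.le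
      _ = θ ^ (k + 1) := (pow_succ' θ k).symm

lemma min_sq_mul_min_div_eight_le {εg εh r b : ℝ} (hεg : 0 < εg) (hεh : 0 < εh)
    (hr : εh / 2 ≤ r) :
    min 1 (b ^ 2) * min (εg * εh) (εh ^ 3) / 8 ≤ min 1 (min (√εg / r) b) ^ 2 * r ^ 3 := by
  have hr0 : 0 < r := by linarith
  have hr3 : εh ^ 3 ≤ 8 * r ^ 3 := by nlinarith [pow_le_pow_left₀ (by positivity) hr 3]
  have hm1 := min_le_left (εg * εh) (εh ^ 3)
  have hm2 := min_le_right (εg * εh) (εh ^ 3)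
  have hm0 : 0 ≤ min (εg * εh) (εh ^ 3) := le_min (by positivity) (by positivity)
  have hK1 := min_le_left 1 (b ^ 2)
  have hK2 := min_le_right 1 (b ^ 2)
  rcases min_choice 1 (min (√εg / r) b) with h | h <;> rw [h]
  · nlinarith [mul_le_mul hK1 hm2 hm0 zero_le_one]
  · rcases min_choice (√εg / r) b with h' | h' <;> rw [h']
    · rw [div_pow, Real.sq_sqrt hεg.le]
      have : εg / r ^ 2 * r ^ 3 = εg * r := by field_simp
      nlinarith [mul_le_mul hK1 hm1 hm0 zero_le_one]
    · nlinarith [mul_le_mul hK2 hm2 hm0 (sq_nonneg b)]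

lemma le_pow_mul_min_sq_mul_cube {εg εh r b η θ : ℝ} {j : ℕ} (hεg : 0 < εg) (hεh : 0 < εh)
    (hr : εh / 2 ≤ r) (hb : 0 ≤ b) (hη : 0 ≤ η) (hθ : 0 ≤ θ)
    (hj : θ * min 1 (min (√εg / r) b) ≤ θ ^ j) :
    η * θ ^ 2 / 8 * min 1 (b ^ 2) * min (εg * εh) (εh ^ 3) ≤ η * θ ^ (2 * j) * r ^ 3 := by
  have hr0 : 0 ≤ r := by linarith
  have hmin0 : 0 ≤ θ * min 1 (min (√εg / r) b) :=
    mul_nonneg hθ (le_min zero_le_one (le_min (by positivity) hb))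
  calc η * θ ^ 2 / 8 * min 1 (b ^ 2) * min (εg * εh) (εh ^ 3)
      = η * θ ^ 2 * (min 1 (b ^ 2) * min (εg * εh) (εh ^ 3) / 8) := by ring
    _ ≤ η * θ ^ 2 * (min 1 (min (√εg / r) b) ^ 2 * r ^ 3) := by
      gcongr
      exact min_sq_mul_min_div_eight_le hεg hεh hr
    _ = η * (θ * min 1 (min (√εg / r) b)) ^ 2 * r ^ 3 := by ring
    _ ≤ η * θ ^ (2 * j) * r ^ 3 := by
      rw [pow_mul']
      gcongr

theorem stmt8_general {n : ℕ} (f : E n → ℝ) (lam : ℝ)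
    (LH : ℝ) (hLH : 0 < LH)
    (hcubic : ∀ x y : E n, f y ≤ f x + ⟪gradient f x, y - x⟫ +
      1 / 2 * ⟪y - x, hess n f x (y - x)⟫ + LH / 6 * ‖y - x‖ ^ 3)
    (εg εh η θ : ℝ) (hεg : εg ∈ Set.Ioo (0:ℝ) 1) (hεh : εh ∈ Set.Ioo (0:ℝ) 1)
    (hη : η ∈ Set.Ioo (0:ℝ) (1/2)) (hθ : θ ∈ Set.Ioo (0:ℝ) 1)
    (x u : E n) (hu : ‖u‖ = 1)
    (ρ : ℝ) (hρ : ρ = ⟪Smap n x εg u, hess n f x (Smap n x εg u)⟫)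
    (hρneg : ρ ≤ -εh / 2)
    (σ : ℝ) (hσ : σ = if 0 ≤ ⟪gvec n f lam x, Smap n x εg u⟫ then 1 else -1)
    (d : E n) (hd : d = -(σ * |ρ|) • u) :
    ∃ j : ℕ,
      (phi n f lam (x + θ ^ j • Smap n x εg d) <
          phi n f lam x - η * θ ^ (2 * j) * ‖d‖ ^ 3) ∧
      (∀ j' < j, ¬(phi n f lam (x + θ ^ j' • Smap n x εg d) <
          phi n f lam x - η * θ ^ (2 * j') * ‖d‖ ^ 3)) ∧
      η * θ ^ 2 / 8 * min 1 (9 * (1 - 2 * η) ^ 2 / LH ^ 2) * min (εg * εh) (εh ^ 3) <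
        phi n f lam x - phi n f lam (x + θ ^ j • Smap n x εg d) := by
  have hρ0 : ρ < 0 := by linarith [hεh.1]
  have hσ1 : |σ| = 1 := by rw [hσ]; split_ifs <;> norm_num
  have hnd : ‖d‖ = -ρ := by
    rw [hd, norm_smul, hu, Real.norm_eq_abs, abs_neg, abs_mul, abs_abs, abs_of_neg hρ0, hσ1]
    ring
  have hsd : Smap n x εg d = -(σ * |ρ|) • Smap n x εg u := by rw [hd, Smap_smul]
  have hcurv : ⟪Smap n x εg d, hess n f x (Smap n x εg d)⟫ = -‖d‖ ^ 3 := by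
    have hσ2 : σ ^ 2 = 1 := by rw [← sq_abs, hσ1, one_pow]
    rw [hsd, map_smul, real_inner_smul_left, real_inner_smul_right, ← hρ, hnd, abs_of_neg hρ0]
    linear_combination ρ ^ 3 * hσ2
  have hdesc : ⟪gvec n f lam x, Smap n x εg d⟫ ≤ 0 :=
    hsd ▸ inner_neg_smul_nonpos_of_sign (abs_nonneg ρ) hσ
  have hb : 0 < 3 * (1 - 2 * η) / LH := div_pos (by linarith [hη.2]) hLH
  have hdpos : 0 < ‖d‖ := by linarith [hεh.1]
  obtain ⟨j, hj, hleast, hθj⟩ := exists_least_of_forall_pow_lt hθ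
    (lt_min (div_pos (Real.sqrt_pos.mpr hεg.1) hdpos) hb)
    (P := fun j => phi n f lam (x + θ ^ j • Smap n x εg d) <
      phi n f lam x - η * θ ^ (2 * j) * ‖d‖ ^ 3) fun j hsmall => by
      rw [pow_mul']
      exact phi_add_smul_Smap_lt hLH hcubic lam hεg.2.le (norm_pos_iff.mp hdpos) hdesc hcurv
        (pow_pos hθ.1 j) ((lt_div_iff₀ hdpos).mp (hsmall.trans_le (min_le_left _ _))).le
        (hsmall.trans_le (min_le_right _ _))
  refine ⟨j, hj, hleast, ?_⟩
  have hbound := le_pow_mul_min_sq_mul_cube hεg.1 hεh.1 (by linarith) hb.le hη.1.le hθ.1.le hθj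
  have hb2 : (3 * (1 - 2 * η) / LH) ^ 2 = 9 * (1 - 2 * η) ^ 2 / LH ^ 2 := by ring
  rw [hb2] at hbound
  linarith

/-- A negative-curvature step of the hybrid proximal gradient / negative
curvature method: the line search terminates at a smallest `j*` and yields a decrease of more
than `(ηθ²/8) min{1, 9(1-2η)²/L_H²} min{ε_g ε_h, ε_h³}`. -/
theorem stmt8 {n : ℕ} (f : E n → ℝ) (hf1 : Differentiable ℝ f)
    (hf2 : Differentiable ℝ (gradient f)) (lam : ℝ) (hlam : 0 < lam)
    (LH : ℝ) (hLH : 0 < LH)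
    (hcubic : ∀ x y : E n, f y ≤ f x + ⟪gradient f x, y - x⟫ +
      1 / 2 * ⟪y - x, hess n f x (y - x)⟫ + LH / 6 * ‖y - x‖ ^ 3)
    (εg εh η θ : ℝ) (hεg : εg ∈ Set.Ioo (0:ℝ) 1) (hεh : εh ∈ Set.Ioo (0:ℝ) 1)
    (hη : η ∈ Set.Ioo (0:ℝ) (1/2)) (hθ : θ ∈ Set.Ioo (0:ℝ) 1)
    (x u : E n) (hu : ‖u‖ = 1) (hu0 : ∀ i, x i = 0 → u i = 0)
    (ρ : ℝ) (hρ : ρ = ⟪Smap n x εg u, hess n f x (Smap n x εg u)⟫)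
    (hρneg : ρ ≤ -εh / 2)
    (σ : ℝ) (hσ : σ = if 0 ≤ ⟪gvec n f lam x, Smap n x εg u⟫ then 1 else -1)
    (d : E n) (hd : d = -(σ * |ρ|) • u) :
    ∃ j : ℕ,
      (phi n f lam (x + θ ^ j • Smap n x εg d) <
          phi n f lam x - η * θ ^ (2 * j) * ‖d‖ ^ 3) ∧
      (∀ j' < j, ¬(phi n f lam (x + θ ^ j' • Smap n x εg d) <
          phi n f lam x - η * θ ^ (2 * j') * ‖d‖ ^ 3)) ∧
      η * θ ^ 2 / 8 * min 1 (9 * (1 - 2 * η) ^ 2 / LH ^ 2) * min (εg * εh) (εh ^ 3) <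
        phi n f lam x - phi n f lam (x + θ ^ j • Smap n x εg d) :=
  stmt8_general f lam LH hLH hcubic εg εh η θ hεg hεh hη hθ x u hu ρ hρ hρneg σ hσ d hd
end
end

section
/- Assume f is twice differentiable and satisfies the cubic upper bound with constant L_H > 0, and assume ‖∇²f(x)‖_op ≤ L_g. Let ε_g, ε_h ∈ (0,1), η ∈ (0, 1/2), θ ∈ (0,1), and x ∈ ℝⁿ. Let d ∈ ℝⁿ satisfy: d_i = 0 whenever |x_i| ≤ √ε_g, ⟨g(x), d⟩ ≤ 0, ⟨d, ∇²f(x)·d⟩ = −‖d‖³, and ‖d‖ ≥ ε_h. Then there exists a smallest nonnegative integer j* such that φ(x + θ^{j*}d) < φ(x) − η·θ^{2j*}·ε_h·‖d‖², and φ(x) − φ(x + θ^{j*}d) ≥ η·θ²·min{1, 9(1 − 2η)²/L_H²}·min{ε_g·ε_h, ε_h³}. -/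
/-!
For `α ‖d‖ ≤ √ε_g` no coordinate in the support of `d` changes sign along `x + α d`, so
`lam ‖x + α d‖₁` is affine in `α` with slope `⟨g(x) - ∇f(x), d⟩`. Adding the cubic upper bound, the
gradient terms cancel and `⟨g(x), d⟩ ≤ 0`, `⟨d, ∇²f(x) d⟩ = -‖d‖³` give
`φ(x + α d) ≤ φ(x) - (1/2 - L_H α / 6) α² ‖d‖³`, a sufficient decrease for every
`α < min (√ε_g / ‖d‖) (3 (1 - 2η) / L_H)`. Backtracking therefore stops at a step that is `1` or
at least `θ` times this threshold, and `‖d‖ ≥ ε_h` turns `η α² ε_h ‖d‖²` into the stated bound.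
-/

open scoped RealInnerProductSpace

noncomputable section

section

variable {n : ℕ} (f : E n → ℝ) (lam : ℝ)

theorem lam_mul_abs_add_eq {x d : E n} (i : Fin n) {α : ℝ} (hα : 0 ≤ α)
    (hi : d i ≠ 0 → α * |d i| < |x i|) :
    lam * |x i + α * d i| = lam * |x i| + α * ((gvec n f lam x i - gradient f x i) * d i) := by
  by_cases hdi : d i = 0
  · simp [hdi]
  have hstep : |α * d i| < |x i| := by
    rw [abs_mul, abs_of_nonneg hα]
    exact hi hdi
  have hlow := neg_abs_le (α * d i)
  have hup := le_abs_self (α * d i)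
  rcases lt_trichotomy (x i) 0 with hx | hx | hx
  · rw [abs_of_neg hx] at hstep
    rw [abs_of_neg (by linarith), abs_of_neg hx]
    simp only [gvec, PiLp.toLp_apply, if_neg hx.not_gt, if_pos hx]
    ring
  · rw [hx, abs_zero] at hstep
    exact absurd hstep (abs_nonneg _).not_gt
  · rw [abs_of_pos hx] at hstep
    rw [abs_of_pos (by linarith), abs_of_pos hx]
    simp only [gvec, PiLp.toLp_apply, if_pos hx]
    ring

theorem phi_add_smul_eq {x d : E n} {α : ℝ} (hα : 0 ≤ α)
    (hsmall : ∀ i, d i ≠ 0 → α * |d i| < |x i|) :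
    phi n f lam (x + α • d) =
      phi n f lam x + (f (x + α • d) - f x) +
        α * (⟪gvec n f lam x, d⟫ - ⟪gradient f x, d⟫) := by
  have hsum : lam * ∑ i, |(x + α • d) i| =
      lam * ∑ i, |x i| + α * (⟪gvec n f lam x, d⟫ - ⟪gradient f x, d⟫) := by
    simp only [PiLp.add_apply, PiLp.smul_apply, smul_eq_mul, Finset.mul_sum,
      lam_mul_abs_add_eq f lam _ hα (hsmall _), Finset.sum_add_distrib, PiLp.inner_apply,
      RCLike.inner_apply, conj_trivial, ← Finset.sum_sub_distrib]
    congr 1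
    exact Finset.sum_congr rfl fun i _ => by ring
  simp only [phi]
  linarith

theorem phi_add_smul_le {LH : ℝ}
    (hcubic : ∀ x y : E n, f y ≤ f x + ⟪gradient f x, y - x⟫ +
      1 / 2 * ⟪y - x, hess n f x (y - x)⟫ + LH / 6 * ‖y - x‖ ^ 3)
    {x d : E n} {α : ℝ} (hα : 0 ≤ α) (hsmall : ∀ i, d i ≠ 0 → α * |d i| < |x i|) :
    phi n f lam (x + α • d) ≤ phi n f lam x + α * ⟪gvec n f lam x, d⟫ +
      α ^ 2 / 2 * ⟪d, hess n f x d⟫ + LH / 6 * α ^ 3 * ‖d‖ ^ 3 := by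
  have hcub := hcubic x (x + α • d)
  rw [add_sub_cancel_left, real_inner_smul_right, map_smul, real_inner_smul_left,
    real_inner_smul_right, norm_smul, Real.norm_eq_abs, abs_of_nonneg hα, mul_pow] at hcub
  rw [phi_add_smul_eq f lam hα hsmall]
  linarith

theorem phi_add_smul_lt_of_neg_curvature {LH : ℝ} (hLH : 0 < LH)
    (hcubic : ∀ x y : E n, f y ≤ f x + ⟪gradient f x, y - x⟫ +
      1 / 2 * ⟪y - x, hess n f x (y - x)⟫ + LH / 6 * ‖y - x‖ ^ 3)
    {η εh : ℝ} (hη : 0 < η) {x d : E n} (hgd : ⟪gvec n f lam x, d⟫ ≤ 0)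
    (hcurv : ⟪d, hess n f x d⟫ = -‖d‖ ^ 3) (hdnorm : εh ≤ ‖d‖) (hd : d ≠ 0)
    {α : ℝ} (hα : 0 < α) (hαb : α < 3 * (1 - 2 * η) / LH)
    (hsmall : ∀ i, d i ≠ 0 → α * |d i| < |x i|) :
    phi n f lam (x + α • d) < phi n f lam x - η * α ^ 2 * εh * ‖d‖ ^ 2 := by
  have hle := phi_add_smul_le f lam hcubic hα.le hsmall
  rw [hcurv] at hle
  have hLHα : LH * α < 3 * (1 - 2 * η) := by rwa [lt_div_iff₀' hLH] at hαb
  have hmodel : 0 < (3 * (1 - 2 * η) - LH * α) * (α ^ 2 * ‖d‖ ^ 3) :=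
    mul_pos (by linarith) (by positivity)
  have hεh : η * α ^ 2 * εh * ‖d‖ ^ 2 ≤ η * α ^ 2 * ‖d‖ ^ 3 := by
    rw [pow_succ ‖d‖ 2, mul_comm _ ‖d‖, ← mul_assoc]
    gcongr
  nlinarith [mul_nonpos_of_nonneg_of_nonpos hα.le hgd]

end

theorem exists_first_pow_of_forall_pow_lt {θ c : ℝ} (hθ0 : 0 < θ) (hθ1 : θ < 1) (hc : 0 < c)
    {P : ℕ → Prop} (hP : ∀ j, θ ^ j < c → P j) :
    ∃ j, P j ∧ (∀ j' < j, ¬P j') ∧ min 1 (θ * c) ≤ θ ^ j := by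
  classical
  obtain ⟨J, hJ⟩ := exists_pow_lt_of_lt_one hc hθ1
  have hex : ∃ j, P j := ⟨J, hP J hJ⟩
  refine ⟨Nat.find hex, Nat.find_spec hex, fun j' => Nat.find_min hex, ?_⟩
  cases hj : Nat.find hex with
  | zero => exact pow_zero θ ▸ min_le_left _ _
  | succ k =>
    have hck : c ≤ θ ^ k := not_lt.mp fun h => Nat.find_min hex (by omega) (hP k h)
    rw [pow_succ']
    exact (min_le_right _ _).trans (mul_le_mul_of_nonneg_left hck hθ0.le)

theorem min_mul_min_le_sq_mul_of_le {θ εg εh D b t : ℝ} (hθ0 : 0 < θ) (hθ1 : θ < 1)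
    (hεg : 0 ≤ εg) (hεh : 0 < εh) (hD : εh ≤ D) (hb : 0 ≤ b)
    (ht : min 1 (θ * min (√εg / D) b) ≤ t) :
    θ ^ 2 * min 1 (b ^ 2) * min (εg * εh) (εh ^ 3) ≤ t ^ 2 * εh * D ^ 2 := by
  have hD0 : 0 < D := hεh.trans_le hD
  set m := min 1 (min (√εg / D) b)
  have hm : 0 ≤ m := le_min zero_le_one (le_min (by positivity) hb)
  have htm : θ * m ≤ t := by
    refine le_trans ?_ ht
    rw [mul_min_of_nonneg _ _ hθ0.le, mul_one]
    exact min_le_min_right _ hθ1.le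
  have hmin : min 1 (b ^ 2) * min (εg * εh) (εh ^ 3) ≤ m ^ 2 * (εh * D ^ 2) := by
    have hεh3 : εh ^ 3 ≤ εh * D ^ 2 := by
      rw [pow_succ', mul_le_mul_iff_right₀ hεh]
      gcongr
    rcases min_choice 1 (min (√εg / D) b) with h1 | hc
    · rw [show m = 1 from h1, one_pow, one_mul]
      exact (mul_le_of_le_one_left (by positivity) (min_le_left _ _)).trans
        ((min_le_right _ _).trans hεh3)
    rcases min_choice (√εg / D) b with hg | hb'
    · have hsq : (√εg / D) ^ 2 * (εh * D ^ 2) = εg * εh := by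
        field_simp
        rw [Real.sq_sqrt hεg]
      rw [show m = √εg / D from hc.trans hg, hsq]
      exact mul_le_of_le_one_left (by positivity) (min_le_left _ _) |>.trans (min_le_left _ _)
    · rw [show m = b from hc.trans hb']
      exact mul_le_mul (min_le_right _ _) ((min_le_right _ _).trans hεh3) (by positivity)
        (by positivity)
  calc θ ^ 2 * min 1 (b ^ 2) * min (εg * εh) (εh ^ 3)
      ≤ θ ^ 2 * (m ^ 2 * (εh * D ^ 2)) := by
        rw [mul_assoc]
        gcongr
    _ = (θ * m) ^ 2 * εh * D ^ 2 := by ring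
    _ ≤ t ^ 2 * εh * D ^ 2 := by gcongr

theorem stmt12_general {n : ℕ} (f : E n → ℝ) (lam : ℝ)
    (LH : ℝ) (hLH : 0 < LH)
    (hcubic : ∀ x y : E n, f y ≤ f x + ⟪gradient f x, y - x⟫ +
      1 / 2 * ⟪y - x, hess n f x (y - x)⟫ + LH / 6 * ‖y - x‖ ^ 3)
    (εg εh η θ : ℝ) (hεg : εg ∈ Set.Ioo (0:ℝ) 1) (hεh : εh ∈ Set.Ioo (0:ℝ) 1)
    (hη : η ∈ Set.Ioo (0:ℝ) (1/2)) (hθ : θ ∈ Set.Ioo (0:ℝ) 1)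
    (x : E n)
    (d : E n) (hd0 : ∀ i, |x i| ≤ Real.sqrt εg → d i = 0)
    (hgd : ⟪gvec n f lam x, d⟫ ≤ 0)
    (hcurv : ⟪d, hess n f x d⟫ = -‖d‖ ^ 3)
    (hdnorm : εh ≤ ‖d‖) :
    ∃ j : ℕ,
      (phi n f lam (x + θ ^ j • d) <
          phi n f lam x - η * θ ^ (2 * j) * εh * ‖d‖ ^ 2) ∧
      (∀ j' < j, ¬(phi n f lam (x + θ ^ j' • d) <
          phi n f lam x - η * θ ^ (2 * j') * εh * ‖d‖ ^ 2)) ∧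
      η * θ ^ 2 * min 1 (9 * (1 - 2 * η) ^ 2 / LH ^ 2) * min (εg * εh) (εh ^ 3) ≤
        phi n f lam x - phi n f lam (x + θ ^ j • d) := by
  obtain ⟨hεg0, -⟩ := hεg
  obtain ⟨hεh0, -⟩ := hεh
  obtain ⟨hη0, hη1⟩ := hη
  obtain ⟨hθ0, hθ1⟩ := hθ
  have hd : 0 < ‖d‖ := hεh0.trans_le hdnorm
  set b := 3 * (1 - 2 * η) / LH with hb_def
  have hb : 0 < b := div_pos (by linarith) hLH
  have hdec : ∀ j : ℕ, θ ^ j < min (√εg / ‖d‖) b →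
      phi n f lam (x + θ ^ j • d) < phi n f lam x - η * θ ^ (2 * j) * εh * ‖d‖ ^ 2 := by
    intro j hj
    rw [pow_mul']
    refine phi_add_smul_lt_of_neg_curvature f lam hLH hcubic hη0 hgd hcurv hdnorm
      (norm_pos_iff.mp hd) (by positivity) (hj.trans_le (min_le_right _ _)) fun i hi => ?_
    calc θ ^ j * |d i| ≤ θ ^ j * ‖d‖ := by gcongr; exact PiLp.norm_apply_le d i
      _ < √εg := (lt_div_iff₀ hd).mp (hj.trans_le (min_le_left _ _))
      _ < |x i| := not_le.mp (mt (hd0 i) hi)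
  obtain ⟨j, hj, hfirst, hθj⟩ :=
    exists_first_pow_of_forall_pow_lt hθ0 hθ1 (lt_min (by positivity) hb) hdec
  refine ⟨j, hj, hfirst, ?_⟩
  have hb2 : 9 * (1 - 2 * η) ^ 2 / LH ^ 2 = b ^ 2 := by rw [hb_def, div_pow]; ring
  rw [pow_mul'] at hj
  calc η * θ ^ 2 * min 1 (9 * (1 - 2 * η) ^ 2 / LH ^ 2) * min (εg * εh) (εh ^ 3)
      = η * (θ ^ 2 * min 1 (b ^ 2) * min (εg * εh) (εh ^ 3)) := by rw [hb2]; ring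
    _ ≤ η * ((θ ^ j) ^ 2 * εh * ‖d‖ ^ 2) := mul_le_mul_of_nonneg_left
        (min_mul_min_le_sq_mul_of_le hθ0 hθ1 hεg0.le hεh0 hdnorm hb.le hθj) hη0.le
    _ ≤ phi n f lam x - phi n f lam (x + θ ^ j • d) := by linarith

/-- A Newton-CG negative-curvature step: for a direction `d` supported on
`{i : |x_i| > √ε_g}` with `⟨g(x), d⟩ ≤ 0`, `⟨d, ∇²f(x)d⟩ = -‖d‖³` and `‖d‖ ≥ ε_h`, the line
search terminates at a smallest `j*` and the decrease is at least
`ηθ² min{1, 9(1-2η)²/L_H²} min{ε_g ε_h, ε_h³}`. -/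
theorem stmt12 {n : ℕ} (f : E n → ℝ) (hf1 : Differentiable ℝ f)
    (hf2 : Differentiable ℝ (gradient f)) (lam : ℝ) (hlam : 0 < lam)
    (LH : ℝ) (hLH : 0 < LH)
    (hcubic : ∀ x y : E n, f y ≤ f x + ⟪gradient f x, y - x⟫ +
      1 / 2 * ⟪y - x, hess n f x (y - x)⟫ + LH / 6 * ‖y - x‖ ^ 3)
    (εg εh η θ : ℝ) (hεg : εg ∈ Set.Ioo (0:ℝ) 1) (hεh : εh ∈ Set.Ioo (0:ℝ) 1)
    (hη : η ∈ Set.Ioo (0:ℝ) (1/2)) (hθ : θ ∈ Set.Ioo (0:ℝ) 1)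
    (x : E n) (Lg : ℝ) (hop : ‖hess n f x‖ ≤ Lg)
    (d : E n) (hd0 : ∀ i, |x i| ≤ Real.sqrt εg → d i = 0)
    (hgd : ⟪gvec n f lam x, d⟫ ≤ 0)
    (hcurv : ⟪d, hess n f x d⟫ = -‖d‖ ^ 3)
    (hdnorm : εh ≤ ‖d‖) :
    ∃ j : ℕ,
      (phi n f lam (x + θ ^ j • d) <
          phi n f lam x - η * θ ^ (2 * j) * εh * ‖d‖ ^ 2) ∧
      (∀ j' < j, ¬(phi n f lam (x + θ ^ j' • d) <
          phi n f lam x - η * θ ^ (2 * j') * εh * ‖d‖ ^ 2)) ∧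
      η * θ ^ 2 * min 1 (9 * (1 - 2 * η) ^ 2 / LH ^ 2) * min (εg * εh) (εh ^ 3) ≤
        phi n f lam x - phi n f lam (x + θ ^ j • d) :=
  stmt12_general f lam LH hLH hcubic εg εh η θ hεg hεh hη hθ x d hd0 hgd hcurv hdnorm
end
end

section
/- Assume f is twice differentiable, satisfies the cubic upper bound and the Taylor gradient bound with constant L_H > 0, and ‖∇f(z)‖ ≤ U_g for all z ∈ ℝⁿ. Let ζ ∈ (0,1), η ∈ (0, (1−ζ)/2), θ ∈ (0,1), τ̂ ≥ 1, δ ∈ [0,1], ε_g, ε_h ∈ (0,1), and x ∈ ℝⁿ with J := {i : |x_i| > √ε_g} nonempty. Let ḡ ∈ ℝⁿ be given by ḡ_i = g(x)_i for i ∈ J and ḡ_i = 0 otherwise, and assume ḡ ≠ 0. Let τ > 0 satisfy 2ε_h ≤ τ·‖ḡ‖^δ ≤ 2τ̂·ε_h. Let d ∈ ℝⁿ with d_i = 0 for i ∉ J, and let r̂ ∈ ℝⁿ be the vector with r̂_i = (∇²f(x)·d)_i + τ·‖ḡ‖^δ·d_i + ḡ_i for i ∈ J and r̂_i = 0 otherwise.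 Assume (a) ⟨d, ∇²f(x)·d⟩ + τ·‖ḡ‖^δ·‖d‖² ≥ ε_h·‖d‖², (b) ‖d‖ ≤ 1.1·ε_h⁻¹·‖ḡ‖, and (c) ‖r̂‖ ≤ (ζ/2)·ε_h·‖d‖. Then there exists a smallest nonnegative integer j* with φ(x + θ^{j*}d) < φ(x) − η·θ^{2j*}·ε_h·‖d‖²; and with x⁺ := x + θ^{j*}d and g⁺ ∈ ℝⁿ defined by g⁺_i = g(x⁺)_i for i ∈ J and g⁺_i = 0 otherwise, one has φ(x) − φ(x⁺) ≥ c_sol·min{‖g⁺‖²·ε_h⁻¹, ε_h³, ε_g·ε_h}, where c_sol = η·min{ (4/(√((ζ + 4τ̂)² + 8L_H) + (ζ + 4τ̂)))², 9(1 − ζ − 2η)²·θ²/L_H², θ², (1 − ζ)²·θ²/(4·max{L_H/3, 2η}²) }. -/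
open scoped RealInnerProductSpace

noncomputable section

/-!
Write `σ = τ‖ḡ‖^δ` and `J = {i : |xᵢ| > √ε_g}`. As long as the step `αd` moves no coordinate of
`J` across zero, `‖·‖₁` is linear along it with slope `sign x`, so the cubic upper bound, the
residual identity `⟨ḡ, d⟩ = ⟨r̂, d⟩ - ⟨d, ∇²f(x) d⟩ - σ‖d‖²` and (a), (c) give
`φ(x + αd) - φ(x) ≤ α ε_h ‖d‖² (ζ/2 - 1 - α/2) + (L_H/6) α³ ‖d‖³`; hence small steps are accepted.
Let `θ^j` be the accepted step and `β = θ^{j-1}` (`β = 1` if `j = 0`). Either `βd` moves a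
coordinate of `J` across zero, which forces `ε_g < β²‖d‖²`; or `j ≥ 1` and the rejection of `β`
forces `3(1 - ζ - 2η) ε_h ≤ L_H β² ‖d‖`; or `j = 0`, and then either `‖d‖ ≥ κ ε_h` or, signs on `J`
being preserved, `g⁺ - (r̂ - σd)` is the Taylor remainder of `∇f`, which gives `κ‖g⁺‖ ≤ ε_h‖d‖`.
Here `κ = quadRoot (ζ + 4τ̂) L_H` solves `L_H κ² + (ζ + 4τ̂) κ = 2`. In each case
`θ^{2j} ε_h ‖d‖²` dominates one of the terms of the minimum.
-/

theorem Real.abs_add_eq_of_abs_le {a b : ℝ} (h : |b| ≤ |a|) : |a + b| = |a| + Real.sign a * b := by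
  rcases lt_trichotomy a 0 with ha | rfl | ha
  · rw [abs_of_neg ha, Real.sign_of_neg ha,
      abs_of_nonpos (by linarith [le_abs_self b, abs_of_neg ha])]
    ring
  · obtain rfl : b = 0 := by simpa using h
    simp
  · rw [abs_of_pos ha, Real.sign_of_pos ha,
      abs_of_nonneg (by linarith [neg_abs_le b, abs_of_pos ha])]
    ring

theorem Real.sign_add_of_abs_lt {a b : ℝ} (h : |b| < |a|) : Real.sign (a + b) = Real.sign a := by
  rcases lt_trichotomy a 0 with ha | rfl | ha
  · rw [Real.sign_of_neg ha, Real.sign_of_neg (by linarith [le_abs_self b, abs_of_neg ha])]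
  · exact absurd h (by simp)
  · rw [Real.sign_of_pos ha, Real.sign_of_pos (by linarith [neg_abs_le b, abs_of_pos ha])]

section Coordinates

variable {n : ℕ}

theorem real_inner_eq_sum_mul (u v : E n) : ⟪u, v⟫ = ∑ i, u i * v i := by
  simp [PiLp.inner_apply, mul_comm]

theorem abs_apply_le_norm (u : E n) (i : Fin n) : |u i| ≤ ‖u‖ :=
  PiLp.norm_apply_le u i

theorem norm_le_norm_of_abs_apply_le {u v : E n} (h : ∀ i, |u i| ≤ |v i|) : ‖u‖ ≤ ‖v‖ := by
  simp only [EuclideanSpace.norm_eq, Real.norm_eq_abs]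
  exact Real.sqrt_le_sqrt (Finset.sum_le_sum fun i _ => pow_le_pow_left₀ (abs_nonneg _) (h i) 2)

theorem sum_abs_add_smul {x d : E n} {α : ℝ} (hα : 0 ≤ α) (h : ∀ i, α * |d i| ≤ |x i|) :
    ∑ i, |(x + α • d) i| = ∑ i, |x i| + α * ∑ i, Real.sign (x i) * d i := by
  rw [Finset.mul_sum, ← Finset.sum_add_distrib]
  refine Finset.sum_congr rfl fun i _ => ?_
  have hi : |α * d i| ≤ |x i| := by rw [abs_mul, abs_of_nonneg hα]; exact h i
  rw [PiLp.add_apply, PiLp.smul_apply, smul_eq_mul, Real.abs_add_eq_of_abs_le hi]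
  ring

theorem gvec_apply_of_ne_zero {f : E n → ℝ} {lam : ℝ} {x : E n} {i : Fin n} (hx : x i ≠ 0) :
    gvec n f lam x i = gradient f x i + lam * Real.sign (x i) := by
  rcases hx.lt_or_gt with h | h
  · simp [gvec, h, h.not_gt, Real.sign_of_neg h, sub_eq_add_neg]
  · simp [gvec, h, Real.sign_of_pos h]

end Coordinates

section MaskedVectors

variable {n : ℕ} {εg : ℝ} {x d : E n}

theorem ne_zero_of_sqrt_lt_abs {i : Fin n} (hi : √εg < |x i|) : x i ≠ 0 :=
  abs_pos.mp ((Real.sqrt_nonneg εg).trans_lt hi)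

theorem mul_abs_le_abs_of_support {β : ℝ} (hd0 : ∀ i, |x i| ≤ √εg → d i = 0)
    (h : ∀ i, √εg < |x i| → β * |d i| ≤ |x i|) (i : Fin n) : β * |d i| ≤ |x i| := by
  by_cases hi : √εg < |x i|
  · exact h i hi
  · simp [hd0 i (not_lt.mp hi)]

theorem mul_abs_le_abs_of_mul_norm_le {α : ℝ} (hα : 0 ≤ α) (hd0 : ∀ i, |x i| ≤ √εg → d i = 0)
    (h : α * ‖d‖ ≤ √εg) : ∀ i, α * |d i| ≤ |x i| :=
  mul_abs_le_abs_of_support hd0 fun i hi =>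
    ((mul_le_mul_of_nonneg_left (abs_apply_le_norm d i) hα).trans h).trans hi.le

theorem lt_sq_mul_sq_norm {β : ℝ} {i : Fin n} (hεg : 0 ≤ εg) (hβ : 0 ≤ β) (hi : √εg < |x i|)
    (h : |x i| ≤ β * |d i|) : εg < β ^ 2 * ‖d‖ ^ 2 := by
  have hlt : √εg < β * ‖d‖ :=
    hi.trans_le (h.trans (mul_le_mul_of_nonneg_left (abs_apply_le_norm d i) hβ))
  calc εg = √εg ^ 2 := (Real.sq_sqrt hεg).symm
    _ < (β * ‖d‖) ^ 2 := by gcongr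
    _ = β ^ 2 * ‖d‖ ^ 2 := by ring

theorem inner_masked_eq {u v : E n} (hu : ∀ i, u i = if √εg < |x i| then v i else 0)
    (hd0 : ∀ i, |x i| ≤ √εg → d i = 0) : ⟪u, d⟫ = ⟪v, d⟫ := by
  simp only [real_inner_eq_sum_mul]
  refine Finset.sum_congr rfl fun i _ => ?_
  by_cases hi : √εg < |x i|
  · simp [hu i, hi]
  · simp [hd0 i (not_lt.mp hi)]

variable {H : E n →L[ℝ] E n} {σ : ℝ} {gbar rhat : E n}

theorem ne_zero_of_norm_residual_le {v : E n} {c : ℝ}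
    (hgbar : ∀ i, gbar i = if √εg < |x i| then v i else 0)
    (hrhat : ∀ i, rhat i = if √εg < |x i| then H d i + σ * d i + gbar i else 0)
    (hc : ‖rhat‖ ≤ c * ‖d‖) (hg : gbar ≠ 0) : d ≠ 0 := by
  rintro rfl
  have hr : rhat = 0 := norm_le_zero_iff.mp (by simpa using hc)
  refine hg (PiLp.ext fun i => ?_)
  have hri := hrhat i
  by_cases hi : √εg < |x i|
  · simpa [hr, hi, eq_comm] using hri
  · simp [hgbar i, hi]

theorem inner_gbar_eq (hrhat : ∀ i, rhat i = if √εg < |x i| then H d i + σ * d i + gbar i else 0)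
    (hd0 : ∀ i, |x i| ≤ √εg → d i = 0) :
    ⟪gbar, d⟫ = ⟪rhat, d⟫ - ⟪d, H d⟫ - σ * ‖d‖ ^ 2 := by
  rw [inner_masked_eq (u := rhat) (v := H d + σ • d + gbar) (fun i => by simp [hrhat i]) hd0,
    inner_add_left, inner_add_left, real_inner_smul_left, real_inner_self_eq_norm_sq,
    real_inner_comm d (H d)]
  ring

end MaskedVectors

section LineSearchArithmetic

-- `g, q, r, s` stand for `⟨ḡ, d⟩`, `⟨d, ∇²f(x) d⟩`, `⟨r̂, d⟩` and `‖d‖²`.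
theorem newton_model_le {g q r s σ εh ζ α : ℝ} (hs : 0 ≤ s) (hg : g = r - q - σ * s)
    (ha : εh * s ≤ q + σ * s) (hσ : 2 * εh ≤ σ) (hr : r ≤ ζ / 2 * εh * s) (hα0 : 0 < α)
    (hα1 : α ≤ 1) : α * g + α ^ 2 / 2 * q ≤ α * εh * s * (ζ / 2 - 1 - α / 2) := by
  have h1 : (α - α ^ 2 / 2) * (εh * s) ≤ (α - α ^ 2 / 2) * (q + σ * s) :=
    mul_le_mul_of_nonneg_left ha (by nlinarith)
  have h2 : α ^ 2 / 2 * (2 * εh * s) ≤ α ^ 2 / 2 * (σ * s) := by gcongr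
  have h3 : α * r ≤ α * (ζ / 2 * εh * s) := by gcongr
  subst hg
  linarith

theorem exists_pow_lt_of_model_bound {F : ℝ → ℝ} {a ρ ζ η εh LH θ : ℝ} (ha : 0 < a)
    (hρ : 0 < ρ) (hεh : 0 < εh) (hLH : 0 < LH) (hη : 0 ≤ η) (hηζ : η < (1 - ζ) / 2)
    (hθ0 : 0 < θ) (hθ1 : θ < 1)
    (hF : ∀ α, 0 < α → α ≤ 1 → α ≤ a →
      F α ≤ α * εh * ρ ^ 2 * (ζ / 2 - 1 - α / 2) + LH / 6 * α ^ 3 * ρ ^ 3) :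
    ∃ j : ℕ, F (θ ^ j) < -(η * θ ^ (2 * j) * εh * ρ ^ 2) := by
  obtain ⟨j, hj⟩ := exists_pow_lt_of_lt_one (lt_min ha (div_pos hεh (mul_pos hLH hρ))) hθ1
  refine ⟨j, ?_⟩
  rw [pow_mul']
  set α := θ ^ j
  have hα0 : 0 < α := pow_pos hθ0 j
  have hα1 : α ≤ 1 := pow_le_one₀ hθ0.le hθ1.le
  have hsmall : LH * ρ * α < εh := by
    have h := (lt_min_iff.mp hj).2
    rwa [lt_div_iff₀ (mul_pos hLH hρ), mul_comm] at h
  have hcubic : LH / 6 * α ^ 3 * ρ ^ 3 < εh * α ^ 2 * ρ ^ 2 / 6 := by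
    nlinarith [mul_lt_mul_of_pos_right hsmall (by positivity : 0 < α ^ 2 * ρ ^ 2 / 6)]
  have hslope : α * εh * ρ ^ 2 * (ζ / 2 - 1 - α / 3 + η * α) ≤ 0 :=
    mul_nonpos_of_nonneg_of_nonpos (by positivity)
      (by nlinarith [mul_le_of_le_one_right hη hα1])
  linarith [hF α hα0 hα1 (lt_min_iff.mp hj).1.le]

theorem three_mul_le_of_not_decrease {F β ρ ζ η εh LH : ℝ} (hβ0 : 0 < β) (hβ1 : β ≤ 1)
    (hρ : 0 < ρ) (hεh : 0 ≤ εh) (hη : 0 ≤ η)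
    (hup : F ≤ β * εh * ρ ^ 2 * (ζ / 2 - 1 - β / 2) + LH / 6 * β ^ 3 * ρ ^ 3)
    (hlow : -(η * β ^ 2 * εh * ρ ^ 2) ≤ F) : 3 * (1 - ζ - 2 * η) * εh ≤ LH * β ^ 2 * ρ := by
  have hprod : 0 ≤ β * ρ ^ 2 * (LH / 6 * β ^ 2 * ρ + εh * (ζ / 2 - 1 - β / 2 + η * β)) := by
    linarith [hlow.trans hup]
  have hfactor := (mul_nonneg_iff_of_pos_left (by positivity)).mp hprod
  nlinarith [mul_nonneg hεh (by nlinarith : 0 ≤ (1 + β) / 2 + η * (1 - β))]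

theorem mul_cube_le_of_three_mul_le {β ρ ζ η εh LH θ : ℝ} (hLH : 0 < LH) (hεh : 0 ≤ εh)
    (hβ0 : 0 ≤ β) (hβ1 : β ≤ 1) (hζη : 0 ≤ 1 - ζ - 2 * η)
    (h : 3 * (1 - ζ - 2 * η) * εh ≤ LH * β ^ 2 * ρ) :
    9 * (1 - ζ - 2 * η) ^ 2 * θ ^ 2 / LH ^ 2 * εh ^ 3 ≤ θ ^ 2 * β ^ 2 * εh * ρ ^ 2 := by
  have hsq : (3 * (1 - ζ - 2 * η) * εh) ^ 2 ≤ (LH * β ^ 2 * ρ) ^ 2 :=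
    pow_le_pow_left₀ (by positivity) h 2
  have hβ4 : β ^ 4 ≤ β ^ 2 := pow_le_pow_of_le_one hβ0 hβ1 (by norm_num)
  have h2 : 9 * (1 - ζ - 2 * η) ^ 2 * εh ^ 2 ≤ LH ^ 2 * β ^ 2 * ρ ^ 2 := by
    nlinarith [mul_le_mul_of_nonneg_left hβ4 (by positivity : 0 ≤ LH ^ 2 * ρ ^ 2)]
  rw [div_mul_eq_mul_div, div_le_iff₀ (by positivity)]
  nlinarith [mul_le_mul_of_nonneg_left h2 (by positivity : 0 ≤ θ ^ 2 * εh)]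

def quadRoot (A L : ℝ) : ℝ := 4 / (√(A ^ 2 + 8 * L) + A)

theorem sqrt_sq_add_add_pos {A L : ℝ} (hL : 0 < L) : 0 < √(A ^ 2 + 8 * L) + A := by
  have h : |A| < √(A ^ 2 + 8 * L) := by
    rw [← Real.sqrt_sq_eq_abs]
    exact Real.sqrt_lt_sqrt (sq_nonneg A) (by linarith)
  linarith [neg_abs_le A]

theorem quadRoot_pos {A L : ℝ} (hL : 0 < L) : 0 < quadRoot A L :=
  div_pos four_pos (sqrt_sq_add_add_pos hL)

theorem quadRoot_spec {A L : ℝ} (hL : 0 < L) : A * quadRoot A L + L * quadRoot A L ^ 2 = 2 := by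
  have hS := Real.sq_sqrt (by positivity : 0 ≤ A ^ 2 + 8 * L)
  have hpos := (sqrt_sq_add_add_pos (A := A) hL).ne'
  unfold quadRoot
  field_simp
  linear_combination (-2) * hS

theorem quadRoot_mul_le {A L εh ρ g : ℝ} (hL : 0 < L) (hρ : 0 ≤ ρ)
    (hsmall : ρ ≤ quadRoot A L * εh) (hg : g ≤ A / 2 * εh * ρ + L / 2 * ρ ^ 2) :
    quadRoot A L * g ≤ εh * ρ := by
  have hκ := quadRoot_pos (A := A) hL
  calc quadRoot A L * g ≤ quadRoot A L * (A / 2 * εh * ρ + L / 2 * ρ ^ 2) := by gcongr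
    _ ≤ quadRoot A L * (A / 2 * εh * ρ) + L / 2 * quadRoot A L * ρ * (quadRoot A L * εh) := by
      nlinarith [mul_le_mul_of_nonneg_left hsmall (by positivity : 0 ≤ L / 2 * quadRoot A L * ρ)]
    _ = εh * ρ * (A * quadRoot A L + L * quadRoot A L ^ 2) / 2 := by ring
    _ = εh * ρ := by rw [quadRoot_spec hL]; ring

end LineSearchArithmetic

section NewtonStep

variable {n : ℕ} {f : E n → ℝ} {lam εg σ : ℝ} {H : E n →L[ℝ] E n} {x d gbar rhat : E n}

theorem inner_gbar_sub_gradient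
    (hgbar : ∀ i, gbar i = if √εg < |x i| then gvec n f lam x i else 0)
    (hd0 : ∀ i, |x i| ≤ √εg → d i = 0) :
    ⟪gbar - gradient f x, d⟫ = lam * ∑ i, Real.sign (x i) * d i := by
  rw [real_inner_eq_sum_mul, Finset.mul_sum]
  refine Finset.sum_congr rfl fun i _ => ?_
  by_cases hi : √εg < |x i|
  · rw [PiLp.sub_apply, hgbar i, if_pos hi, gvec_apply_of_ne_zero (ne_zero_of_sqrt_lt_abs hi)]
    ring
  · simp [hd0 i (not_lt.mp hi)]

theorem phi_add_smul_sub_le {LH ζ εh α : ℝ}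
    (hcubic : ∀ y, f y ≤ f x + ⟪gradient f x, y - x⟫ + 1 / 2 * ⟪y - x, H (y - x)⟫ +
      LH / 6 * ‖y - x‖ ^ 3)
    (hgbar : ∀ i, gbar i = if √εg < |x i| then gvec n f lam x i else 0)
    (hd0 : ∀ i, |x i| ≤ √εg → d i = 0)
    (hrhat : ∀ i, rhat i = if √εg < |x i| then H d i + σ * d i + gbar i else 0)
    (ha : εh * ‖d‖ ^ 2 ≤ ⟪d, H d⟫ + σ * ‖d‖ ^ 2) (hσ : 2 * εh ≤ σ)
    (hc : ‖rhat‖ ≤ ζ / 2 * εh * ‖d‖) (hα0 : 0 < α) (hα1 : α ≤ 1)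
    (hsign : ∀ i, α * |d i| ≤ |x i|) :
    phi n f lam (x + α • d) - phi n f lam x ≤
      α * εh * ‖d‖ ^ 2 * (ζ / 2 - 1 - α / 2) + LH / 6 * α ^ 3 * ‖d‖ ^ 3 := by
  have hf := hcubic (x + α • d)
  rw [add_sub_cancel_left, map_smul, real_inner_smul_right, real_inner_smul_left,
    real_inner_smul_right, norm_smul, Real.norm_of_nonneg hα0.le] at hf
  have hl1 : lam * ∑ i, |(x + α • d) i| =
      lam * ∑ i, |x i| + α * (⟪gbar, d⟫ - ⟪gradient f x, d⟫) := by
    rw [sum_abs_add_smul hα0.le hsign, ← inner_sub_left, inner_gbar_sub_gradient hgbar hd0]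
    ring
  have hr : ⟪rhat, d⟫ ≤ ζ / 2 * εh * ‖d‖ ^ 2 :=
    calc ⟪rhat, d⟫ ≤ ‖rhat‖ * ‖d‖ := real_inner_le_norm _ _
      _ ≤ ζ / 2 * εh * ‖d‖ * ‖d‖ := by gcongr
      _ = ζ / 2 * εh * ‖d‖ ^ 2 := by ring
  have hmodel := newton_model_le (sq_nonneg ‖d‖) (inner_gbar_eq hrhat hd0) ha hσ hr hα0 hα1
  unfold phi
  linarith

theorem exists_phi_add_pow_smul_lt {LH ζ η εh θ : ℝ} (hεg : 0 < εg) (hεh : 0 < εh)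
    (hLH : 0 < LH) (hη : 0 ≤ η) (hηζ : η < (1 - ζ) / 2) (hθ0 : 0 < θ) (hθ1 : θ < 1) (hd : d ≠ 0)
    (hd0 : ∀ i, |x i| ≤ √εg → d i = 0)
    (hmodel : ∀ α, 0 < α → α ≤ 1 → (∀ i, α * |d i| ≤ |x i|) →
      phi n f lam (x + α • d) - phi n f lam x ≤
        α * εh * ‖d‖ ^ 2 * (ζ / 2 - 1 - α / 2) + LH / 6 * α ^ 3 * ‖d‖ ^ 3) :
    ∃ j : ℕ, phi n f lam (x + θ ^ j • d) < phi n f lam x - η * θ ^ (2 * j) * εh * ‖d‖ ^ 2 := by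
  have hdpos := norm_pos_iff.mpr hd
  obtain ⟨j, hj⟩ := exists_pow_lt_of_model_bound
    (F := fun α => phi n f lam (x + α • d) - phi n f lam x)
    (div_pos (Real.sqrt_pos.mpr hεg) hdpos) hdpos hεh hLH hη hηζ hθ0 hθ1
    fun α hα0 hα1 hαa => hmodel α hα0 hα1
      (mul_abs_le_abs_of_mul_norm_le hα0.le hd0 ((le_div_iff₀ hdpos).mp hαa))
  exact ⟨j, by linarith⟩

theorem norm_masked_gvec_le {LH : ℝ} {gplus : E n} (hσ : 0 ≤ σ)
    (htaylor : ‖gradient f (x + d) - gradient f x - H d‖ ≤ LH / 2 * ‖d‖ ^ 2)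
    (hgbar : ∀ i, gbar i = if √εg < |x i| then gvec n f lam x i else 0)
    (hd0 : ∀ i, |x i| ≤ √εg → d i = 0)
    (hrhat : ∀ i, rhat i = if √εg < |x i| then H d i + σ * d i + gbar i else 0)
    (hgplus : ∀ i, gplus i = if √εg < |x i| then gvec n f lam (x + d) i else 0)
    (hsign : ∀ i, √εg < |x i| → |d i| < |x i|) :
    ‖gplus‖ ≤ ‖rhat‖ + σ * ‖d‖ + LH / 2 * ‖d‖ ^ 2 := by
  -- On `J` no coordinate changes sign, so the `lam`-terms of `g⁺` and `ḡ` cancel.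
  have hdiff : ‖gplus - (rhat - σ • d)‖ ≤ ‖gradient f (x + d) - gradient f x - H d‖ := by
    refine norm_le_norm_of_abs_apply_le fun i => ?_
    by_cases hi : √εg < |x i|
    · have hx := ne_zero_of_sqrt_lt_abs hi
      have hs : Real.sign ((x + d) i) = Real.sign (x i) := Real.sign_add_of_abs_lt (hsign i hi)
      have hxd : (x + d) i ≠ 0 := by
        intro h
        rw [h, Real.sign_zero, eq_comm, Real.sign_eq_zero_iff] at hs
        exact hx hs
      refine le_of_eq (congrArg abs ?_)
      simp only [PiLp.sub_apply, PiLp.smul_apply, smul_eq_mul, hgplus i, hrhat i, hgbar i,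
        if_pos hi, gvec_apply_of_ne_zero hx, gvec_apply_of_ne_zero hxd, hs]
      ring
    · simp [hgplus i, hrhat i, hi, hd0 i (not_lt.mp hi)]
  calc ‖gplus‖ ≤ ‖rhat - σ • d‖ + ‖gplus - (rhat - σ • d)‖ := norm_le_insert' _ _
    _ ≤ ‖rhat‖ + ‖σ • d‖ + LH / 2 * ‖d‖ ^ 2 := by
      gcongr
      · exact norm_sub_le _ _
      · exact hdiff.trans htaylor
    _ = ‖rhat‖ + σ * ‖d‖ + LH / 2 * ‖d‖ ^ 2 := by rw [norm_smul, Real.norm_of_nonneg hσ]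

end NewtonStep

def csol (ζ η θ τh LH : ℝ) : ℝ :=
  η * min (min (quadRoot (ζ + 4 * τh) LH ^ 2) (9 * (1 - ζ - 2 * η) ^ 2 * θ ^ 2 / LH ^ 2))
    (min (θ ^ 2) ((1 - ζ) ^ 2 * θ ^ 2 / (4 * max (LH / 3) (2 * η) ^ 2)))

section DecreaseBound

variable {ζ η θ τh LH : ℝ}

theorem csol_le_quadRoot (hη : 0 ≤ η) : csol ζ η θ τh LH ≤ η * quadRoot (ζ + 4 * τh) LH ^ 2 :=
  mul_le_mul_of_nonneg_left ((min_le_left _ _).trans (min_le_left _ _)) hη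

theorem csol_le_of_rejected (hη : 0 ≤ η) :
    csol ζ η θ τh LH ≤ η * (9 * (1 - ζ - 2 * η) ^ 2 * θ ^ 2 / LH ^ 2) :=
  mul_le_mul_of_nonneg_left ((min_le_left _ _).trans (min_le_right _ _)) hη

theorem csol_le_sq (hη : 0 ≤ η) : csol ζ η θ τh LH ≤ η * θ ^ 2 :=
  mul_le_mul_of_nonneg_left ((min_le_right _ _).trans (min_le_left _ _)) hη

variable {n : ℕ} {f : E n → ℝ} {lam εg εh σ m : ℝ} {H : E n →L[ℝ] E n} {x d gbar rhat : E n}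

theorem csol_mul_le_of_sign_change {β : ℝ} {i : Fin n} (hεg : 0 ≤ εg) (hεh : 0 ≤ εh)
    (hη : 0 ≤ η) (hβ : 0 ≤ β) (hi : √εg < |x i|) (h : |x i| ≤ β * |d i|) (hm0 : 0 ≤ m)
    (hm : m ≤ εg * εh) : csol ζ η θ τh LH * m ≤ η * (θ ^ 2 * β ^ 2 * εh * ‖d‖ ^ 2) := by
  have hεgd := lt_sq_mul_sq_norm hεg hβ hi h
  calc csol ζ η θ τh LH * m ≤ η * θ ^ 2 * (εg * εh) :=
        mul_le_mul (csol_le_sq hη) hm hm0 (by positivity)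
    _ ≤ η * (θ ^ 2 * β ^ 2 * εh * ‖d‖ ^ 2) := by
      nlinarith [mul_le_mul_of_nonneg_left hεgd.le (by positivity : 0 ≤ η * θ ^ 2 * εh)]

theorem csol_mul_le_of_first_step {gplus : E n} (hLH : 0 < LH) (hη : 0 ≤ η) (hθ0 : 0 ≤ θ)
    (hθ1 : θ ≤ 1) (hεg : 0 ≤ εg) (hεh : 0 < εh) (hσ0 : 0 ≤ σ) (hσ : σ ≤ 2 * τh * εh)
    (htaylor : ‖gradient f (x + d) - gradient f x - H d‖ ≤ LH / 2 * ‖d‖ ^ 2)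
    (hgbar : ∀ i, gbar i = if √εg < |x i| then gvec n f lam x i else 0)
    (hd0 : ∀ i, |x i| ≤ √εg → d i = 0)
    (hrhat : ∀ i, rhat i = if √εg < |x i| then H d i + σ * d i + gbar i else 0)
    (hgplus : ∀ i, gplus i = if √εg < |x i| then gvec n f lam (x + d) i else 0)
    (hc : ‖rhat‖ ≤ ζ / 2 * εh * ‖d‖) (hm0 : 0 ≤ m) (hmg : m ≤ ‖gplus‖ ^ 2 * εh⁻¹)
    (hmh : m ≤ εh ^ 3) (hmε : m ≤ εg * εh) : csol ζ η θ τh LH * m ≤ η * (εh * ‖d‖ ^ 2) := by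
  set κ := quadRoot (ζ + 4 * τh) LH
  have hκ : 0 < κ := quadRoot_pos hLH
  rcases le_or_gt (κ * εh) ‖d‖ with hlarge | hsmall
  · calc csol ζ η θ τh LH * m ≤ η * κ ^ 2 * εh ^ 3 :=
          mul_le_mul (csol_le_quadRoot hη) hmh hm0 (by positivity)
      _ ≤ η * (εh * ‖d‖ ^ 2) := by
        nlinarith [mul_le_mul_of_nonneg_left (pow_le_pow_left₀ (by positivity) hlarge 2)
          (by positivity : 0 ≤ η * εh)]
  by_cases hcross : ∃ i, √εg < |x i| ∧ |x i| ≤ |d i|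
  · obtain ⟨i, hi, hle⟩ := hcross
    refine (csol_mul_le_of_sign_change hεg hεh.le hη zero_le_one hi (by simpa using hle) hm0
      hmε).trans ?_
    nlinarith [pow_le_one₀ hθ0 hθ1 (n := 2), mul_nonneg hη (by positivity : 0 ≤ εh * ‖d‖ ^ 2)]
  push Not at hcross
  have hg := norm_masked_gvec_le hσ0 htaylor hgbar hd0 hrhat hgplus hcross
  have hκg : κ * ‖gplus‖ ≤ εh * ‖d‖ :=
    quadRoot_mul_le hLH (norm_nonneg d) (by linarith) (by nlinarith [norm_nonneg d])
  calc csol ζ η θ τh LH * m ≤ η * κ ^ 2 * (‖gplus‖ ^ 2 * εh⁻¹) :=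
        mul_le_mul (csol_le_quadRoot hη) hmg hm0 (by positivity)
    _ = η * ((κ * ‖gplus‖) ^ 2 / εh) := by ring
    _ ≤ η * ((εh * ‖d‖) ^ 2 / εh) := by gcongr
    _ = η * (εh * ‖d‖ ^ 2) := by field_simp

theorem csol_mul_le_of_rejected_step {β : ℝ} (hLH : 0 < LH) (hη : 0 ≤ η)
    (hζη : 0 ≤ 1 - ζ - 2 * η) (hεg : 0 ≤ εg) (hεh : 0 < εh) (hβ0 : 0 < β) (hβ1 : β ≤ 1)
    (hd : d ≠ 0) (hd0 : ∀ i, |x i| ≤ √εg → d i = 0)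
    (hmodel : (∀ i, β * |d i| ≤ |x i|) → phi n f lam (x + β • d) - phi n f lam x ≤
      β * εh * ‖d‖ ^ 2 * (ζ / 2 - 1 - β / 2) + LH / 6 * β ^ 3 * ‖d‖ ^ 3)
    (hrej : ¬phi n f lam (x + β • d) < phi n f lam x - η * β ^ 2 * εh * ‖d‖ ^ 2)
    (hm0 : 0 ≤ m) (hmh : m ≤ εh ^ 3) (hmε : m ≤ εg * εh) :
    csol ζ η θ τh LH * m ≤ η * (θ ^ 2 * β ^ 2 * εh * ‖d‖ ^ 2) := by
  by_cases hcross : ∃ i, √εg < |x i| ∧ |x i| ≤ β * |d i|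
  · obtain ⟨i, hi, hle⟩ := hcross
    exact csol_mul_le_of_sign_change hεg hεh.le hη hβ0.le hi hle hm0 hmε
  push Not at hcross
  have hsign := mul_abs_le_abs_of_support hd0 fun i hi => (hcross i hi).le
  have hcurv := three_mul_le_of_not_decrease hβ0 hβ1 (norm_pos_iff.mpr hd) hεh.le hη
    (hmodel hsign) (by linarith [not_lt.mp hrej])
  calc csol ζ η θ τh LH * m ≤ η * (9 * (1 - ζ - 2 * η) ^ 2 * θ ^ 2 / LH ^ 2) * εh ^ 3 :=
        mul_le_mul (csol_le_of_rejected hη) hmh hm0 (by positivity)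
    _ ≤ η * (θ ^ 2 * β ^ 2 * εh * ‖d‖ ^ 2) := by
      rw [mul_assoc]
      exact mul_le_mul_of_nonneg_left
        (mul_cube_le_of_three_mul_le hLH hεh.le hβ0.le hβ1 hζη hcurv) hη

end DecreaseBound

theorem stmt13_general {n : ℕ} (f : E n → ℝ) (lam : ℝ)
    (LH : ℝ) (hLH : 0 < LH)
    (hcubic : ∀ x y : E n, f y ≤ f x + ⟪gradient f x, y - x⟫ +
      1 / 2 * ⟪y - x, hess n f x (y - x)⟫ + LH / 6 * ‖y - x‖ ^ 3)
    (htaylor : ∀ x y : E n,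
      ‖gradient f y - gradient f x - hess n f x (y - x)‖ ≤ LH / 2 * ‖y - x‖ ^ 2)
    (ζ η θ τh δ εg εh : ℝ) (hη : η ∈ Set.Ioo (0:ℝ) ((1 - ζ)/2))
    (hθ : θ ∈ Set.Ioo (0:ℝ) 1)
    (hεg : εg ∈ Set.Ioo (0:ℝ) 1) (hεh : εh ∈ Set.Ioo (0:ℝ) 1)
    (x : E n)
    (gbar : E n)
    (hgbar : ∀ i, gbar i = if Real.sqrt εg < |x i| then gvec n f lam x i else 0)
    (hgbar0 : gbar ≠ 0)
    (τ : ℝ)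
    (hτlo : 2 * εh ≤ τ * ‖gbar‖ ^ δ) (hτhi : τ * ‖gbar‖ ^ δ ≤ 2 * τh * εh)
    (d : E n) (hd0 : ∀ i, |x i| ≤ Real.sqrt εg → d i = 0)
    (rhat : E n)
    (hrhat : ∀ i, rhat i = if Real.sqrt εg < |x i| then
        hess n f x d i + τ * ‖gbar‖ ^ δ * d i + gbar i else 0)
    (ha : εh * ‖d‖ ^ 2 ≤ ⟪d, hess n f x d⟫ + τ * ‖gbar‖ ^ δ * ‖d‖ ^ 2)
    (hc : ‖rhat‖ ≤ ζ / 2 * εh * ‖d‖) :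
    ∃ j : ℕ,
      (phi n f lam (x + θ ^ j • d) <
          phi n f lam x - η * θ ^ (2 * j) * εh * ‖d‖ ^ 2) ∧
      (∀ j' < j, ¬(phi n f lam (x + θ ^ j' • d) <
          phi n f lam x - η * θ ^ (2 * j') * εh * ‖d‖ ^ 2)) ∧
      ∀ gplus : E n,
        (∀ i, gplus i = if Real.sqrt εg < |x i| then
            gvec n f lam (x + θ ^ j • d) i else 0) →
        η * min (min ((4 / (Real.sqrt ((ζ + 4 * τh) ^ 2 + 8 * LH) + (ζ + 4 * τh))) ^ 2)
              (9 * (1 - ζ - 2 * η) ^ 2 * θ ^ 2 / LH ^ 2))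
            (min (θ ^ 2) ((1 - ζ) ^ 2 * θ ^ 2 / (4 * max (LH / 3) (2 * η) ^ 2))) *
          min (min (‖gplus‖ ^ 2 * εh⁻¹) (εh ^ 3)) (εg * εh) ≤
        phi n f lam x - phi n f lam (x + θ ^ j • d) := by
  have hd : d ≠ 0 := ne_zero_of_norm_residual_le hgbar hrhat hc hgbar0
  have hmodel := fun α (hα0 : 0 < α) hα1 hsign =>
    phi_add_smul_sub_le (hcubic x) hgbar hd0 hrhat ha hτlo hc hα0 hα1 hsign
  have hex := exists_phi_add_pow_smul_lt hεg.1 hεh.1 hLH hη.1.le hη.2 hθ.1 hθ.2 hd hd0 hmodel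
  refine ⟨Nat.find hex, Nat.find_spec hex, fun _ => Nat.find_min hex, fun gplus hgplus => ?_⟩
  have hdec := Nat.find_spec hex
  have hrej := fun k (hk : k < Nat.find hex) => Nat.find_min hex hk
  generalize Nat.find hex = j at *
  set M := min (min (‖gplus‖ ^ 2 * εh⁻¹) (εh ^ 3)) (εg * εh)
  have hM0 : 0 ≤ M := le_min (le_min (mul_nonneg (sq_nonneg _) (inv_nonneg.mpr hεh.1.le))
    (pow_nonneg hεh.1.le 3)) (mul_nonneg hεg.1.le hεh.1.le)
  suffices h : csol ζ η θ τh LH * M ≤ η * (θ ^ (2 * j) * εh * ‖d‖ ^ 2) by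
    change csol ζ η θ τh LH * M ≤ _
    linarith
  rcases j with _ | k
  · simp only [pow_zero, one_smul, mul_zero, one_mul] at hgplus ⊢
    exact csol_mul_le_of_first_step hLH hη.1.le hθ.1.le hθ.2.le hεg.1.le hεh.1
      (by linarith [hεh.1]) hτhi (by simpa using htaylor x (x + d)) hgbar hd0 hrhat hgplus hc
      hM0 ((min_le_left _ _).trans (min_le_left _ _)) ((min_le_left _ _).trans (min_le_right _ _))
      (min_le_right _ _)
  · rw [show θ ^ (2 * (k + 1)) = θ ^ 2 * (θ ^ k) ^ 2 by ring]
    exact csol_mul_le_of_rejected_step hLH hη.1.le (by linarith [hη.2]) hεg.1.le hεh.1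
      (pow_pos hθ.1 k) (pow_le_one₀ hθ.1.le hθ.2.le) hd hd0 (hmodel _ (pow_pos hθ.1 k)
        (pow_le_one₀ hθ.1.le hθ.2.le)) (by simpa [pow_mul'] using hrej k k.lt_succ_self)
      hM0 ((min_le_left _ _).trans (min_le_right _ _)) (min_le_right _ _)

/-- A Newton-CG step with an approximate solution of the regularized Newton
equation: under the Capped-CG guarantees (a)–(c), the line search terminates at a smallest
`j*` and the decrease is at least `c_sol · min{‖g⁺‖² ε_h⁻¹, ε_h³, ε_g ε_h}`. -/
theorem stmt13 {n : ℕ} (f : E n → ℝ) (hf1 : Differentiable ℝ f)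
    (hf2 : Differentiable ℝ (gradient f)) (lam : ℝ) (hlam : 0 < lam)
    (LH : ℝ) (hLH : 0 < LH)
    (hcubic : ∀ x y : E n, f y ≤ f x + ⟪gradient f x, y - x⟫ +
      1 / 2 * ⟪y - x, hess n f x (y - x)⟫ + LH / 6 * ‖y - x‖ ^ 3)
    (htaylor : ∀ x y : E n,
      ‖gradient f y - gradient f x - hess n f x (y - x)‖ ≤ LH / 2 * ‖y - x‖ ^ 2)
    (Ug : ℝ) (hUg : ∀ z : E n, ‖gradient f z‖ ≤ Ug)
    (ζ η θ τh δ εg εh : ℝ) (hζ : ζ ∈ Set.Ioo (0:ℝ) 1) (hη : η ∈ Set.Ioo (0:ℝ) ((1 - ζ)/2))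
    (hθ : θ ∈ Set.Ioo (0:ℝ) 1) (hτh : 1 ≤ τh) (hδ : δ ∈ Set.Icc (0:ℝ) 1)
    (hεg : εg ∈ Set.Ioo (0:ℝ) 1) (hεh : εh ∈ Set.Ioo (0:ℝ) 1)
    (x : E n) (hJ : ∃ i, Real.sqrt εg < |x i|)
    (gbar : E n)
    (hgbar : ∀ i, gbar i = if Real.sqrt εg < |x i| then gvec n f lam x i else 0)
    (hgbar0 : gbar ≠ 0)
    (τ : ℝ) (hτpos : 0 < τ)
    (hτlo : 2 * εh ≤ τ * ‖gbar‖ ^ δ) (hτhi : τ * ‖gbar‖ ^ δ ≤ 2 * τh * εh)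
    (d : E n) (hd0 : ∀ i, |x i| ≤ Real.sqrt εg → d i = 0)
    (rhat : E n)
    (hrhat : ∀ i, rhat i = if Real.sqrt εg < |x i| then
        hess n f x d i + τ * ‖gbar‖ ^ δ * d i + gbar i else 0)
    (ha : εh * ‖d‖ ^ 2 ≤ ⟪d, hess n f x d⟫ + τ * ‖gbar‖ ^ δ * ‖d‖ ^ 2)
    (hb : ‖d‖ ≤ 1.1 * εh⁻¹ * ‖gbar‖)
    (hc : ‖rhat‖ ≤ ζ / 2 * εh * ‖d‖) :
    ∃ j : ℕ,
      (phi n f lam (x + θ ^ j • d) <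
          phi n f lam x - η * θ ^ (2 * j) * εh * ‖d‖ ^ 2) ∧
      (∀ j' < j, ¬(phi n f lam (x + θ ^ j' • d) <
          phi n f lam x - η * θ ^ (2 * j') * εh * ‖d‖ ^ 2)) ∧
      ∀ gplus : E n,
        (∀ i, gplus i = if Real.sqrt εg < |x i| then
            gvec n f lam (x + θ ^ j • d) i else 0) →
        η * min (min ((4 / (Real.sqrt ((ζ + 4 * τh) ^ 2 + 8 * LH) + (ζ + 4 * τh))) ^ 2)
              (9 * (1 - ζ - 2 * η) ^ 2 * θ ^ 2 / LH ^ 2))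
            (min (θ ^ 2) ((1 - ζ) ^ 2 * θ ^ 2 / (4 * max (LH / 3) (2 * η) ^ 2))) *
          min (min (‖gplus‖ ^ 2 * εh⁻¹) (εh ^ 3)) (εg * εh) ≤
        phi n f lam x - phi n f lam (x + θ ^ j • d) :=
  stmt13_general f lam LH hLH hcubic htaylor ζ η θ τh δ εg εh hη hθ hεg hεh x gbar hgbar hgbar0 τ
    hτlo hτhi d hd0 rhat hrhat ha hc
end
end

section
/- Let φ : ℝⁿ → ℝ and φ_low ∈ ℝ with φ(x) ≥ φ_low for all x. Let ε, ε_h ∈ (0,1), c₁ > 0, c₂ > 0, N ∈ ℕ, and let x⁰, …, x^N ∈ ℝⁿ with φ(x^{l+1}) ≤ φ(x^l) for all l < N. Suppose {0, …, N−1} is partitioned into sets K₁, K₂, K₃ such that: φ(x^l) − φ(x^{l+1}) ≥ c₁·ε^{3/2} for all l ∈ K₁; φ(x^l) − φ(x^{l+1}) ≥ c₂·min{ε·ε_h, ε_h³, ε²·ε_h⁻¹} for all l ∈ K₂; and every l ∈ K₃ with l + 1 ≤ N − 1 satisfies l + 1 ∈ K₁. Then N ≤ 2·(φ(x⁰) −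 φ_low)/(c₁·ε^{3/2}) + (φ(x⁰) − φ_low)/(c₂·min{ε·ε_h, ε_h³, ε²·ε_h⁻¹}) + 1. -/
/-- Counting argument for the first-order iteration complexity of the
proximal gradient–Newton-CG method, with proximal-gradient steps `K₁`, productive Newton-CG
steps `K₂`, and Newton-CG steps `K₃` that are necessarily followed by a proximal-gradient
step. -/
theorem stmt14 {n : ℕ} (φ : EuclideanSpace ℝ (Fin n) → ℝ) (φlow : ℝ)
    (hlow : ∀ x, φlow ≤ φ x)
    (ε εh : ℝ) (hε : ε ∈ Set.Ioo (0:ℝ) 1) (hεh : εh ∈ Set.Ioo (0:ℝ) 1)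
    (c₁ c₂ : ℝ) (hc₁ : 0 < c₁) (hc₂ : 0 < c₂)
    (N : ℕ) (x : ℕ → EuclideanSpace ℝ (Fin n))
    (hmono : ∀ l < N, φ (x (l + 1)) ≤ φ (x l))
    (K₁ K₂ K₃ : Finset ℕ) (hunion : K₁ ∪ K₂ ∪ K₃ = Finset.range N)
    (hd12 : Disjoint K₁ K₂) (hd13 : Disjoint K₁ K₃) (hd23 : Disjoint K₂ K₃)
    (h1 : ∀ l ∈ K₁, c₁ * ε ^ ((3:ℝ)/2) ≤ φ (x l) - φ (x (l + 1)))
    (h2 : ∀ l ∈ K₂, c₂ * min (ε * εh) (min (εh ^ 3) (ε ^ 2 * εh⁻¹)) ≤ φ (x l) - φ (x (l + 1)))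
    (h3 : ∀ l ∈ K₃, l + 1 < N → l + 1 ∈ K₁) :
    (N : ℝ) ≤ 2 * (φ (x 0) - φlow) / (c₁ * ε ^ ((3:ℝ)/2)) +
      (φ (x 0) - φlow) / (c₂ * min (ε * εh) (min (εh ^ 3) (ε ^ 2 * εh⁻¹))) + 1 := by
  obtain ⟨hε0, hε1⟩ := hε
  obtain ⟨hεh0, hεh1⟩ := hεh
  set A := c₁ * ε ^ ((3:ℝ)/2) with hA
  set B := c₂ * min (ε * εh) (min (εh ^ 3) (ε ^ 2 * εh⁻¹)) with hB
  have hApos : 0 < A := mul_pos hc₁ (Real.rpow_pos_of_pos hε0 _)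
  have hBpos : 0 < B := mul_pos hc₂
    (lt_min (mul_pos hε0 hεh0) (lt_min (pow_pos hεh0 3)
      (mul_pos (pow_pos hε0 2) (inv_pos.mpr hεh0))))
  set D := φ (x 0) - φlow with hD
  set f : ℕ → ℝ := fun l => φ (x l) - φ (x (l + 1)) with hf
  have hnonneg : ∀ l ∈ Finset.range N, 0 ≤ f l := fun l hl =>
    sub_nonneg.mpr (hmono l (Finset.mem_range.mp hl))
  have hsum_le : ∑ l ∈ Finset.range N, f l ≤ D := by
    have h := Finset.sum_range_sub' (fun l => φ (x l)) N
    rw [hf, h]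
    have := hlow (x N)
    simp only [hD]
    linarith
  have hK1sub : K₁ ⊆ Finset.range N := by
    rw [← hunion]; exact Finset.subset_union_left.trans Finset.subset_union_left
  have hK2sub : K₂ ⊆ Finset.range N := by
    rw [← hunion]; exact Finset.subset_union_right.trans Finset.subset_union_left
  have hK3sub : K₃ ⊆ Finset.range N := by
    rw [← hunion]; exact Finset.subset_union_right
  have key : ∀ (K : Finset ℕ) (c : ℝ), K ⊆ Finset.range N →
      (∀ l ∈ K, c ≤ f l) → (K.card : ℝ) * c ≤ D := by
    intro K c hsub hbd
    calc (K.card : ℝ) * c = K.card • c := (nsmul_eq_mul _ _).symm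
      _ ≤ ∑ l ∈ K, f l := Finset.card_nsmul_le_sum K f c hbd
      _ ≤ ∑ l ∈ Finset.range N, f l :=
          Finset.sum_le_sum_of_subset_of_nonneg hsub (fun i hi _ => hnonneg i hi)
      _ ≤ D := hsum_le
  have h1c : (K₁.card : ℝ) * A ≤ D := key K₁ A hK1sub h1
  have h2c : (K₂.card : ℝ) * B ≤ D := key K₂ B hK2sub h2
  have h3c : K₃.card ≤ K₁.card + 1 := by
    have hinj : ((K₃.erase (N - 1)).card ≤ K₁.card) := by
      apply Finset.card_le_card_of_injOn (fun l => l + 1)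
      · intro l hl
        have hlK3 := Finset.mem_of_mem_erase hl
        have hne := Finset.ne_of_mem_erase hl
        have hlt : l < N := Finset.mem_range.mp (hK3sub hlK3)
        exact h3 l hlK3 (by omega)
      · intro a _ b _ h; simpa using h
    have hsub : K₃ ⊆ insert (N - 1) (K₃.erase (N - 1)) := by
      rw [Finset.subset_insert_iff]
    calc K₃.card ≤ (insert (N - 1) (K₃.erase (N - 1))).card := Finset.card_le_card hsub
      _ ≤ (K₃.erase (N - 1)).card + 1 := Finset.card_insert_le _ _
      _ ≤ K₁.card + 1 := by omega
  have hNcard : N = K₁.card + K₂.card + K₃.card := by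
    have d123 : Disjoint (K₁ ∪ K₂) K₃ := Finset.disjoint_union_left.mpr ⟨hd13, hd23⟩
    rw [← Finset.card_range N, ← hunion, Finset.card_union_of_disjoint d123,
      Finset.card_union_of_disjoint hd12]
  have hK1le : (K₁.card : ℝ) ≤ D / A := (le_div_iff₀ hApos).mpr h1c
  have hK2le : (K₂.card : ℝ) ≤ D / B := (le_div_iff₀ hBpos).mpr h2c
  have hK3le : (K₃.card : ℝ) ≤ (K₁.card : ℝ) + 1 := by exact_mod_cast h3c
  have hNle : (N : ℝ) = (K₁.card : ℝ) + K₂.card + K₃.card := by exact_mod_cast hNcard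
  have : 2 * D / A = 2 * (D / A) := by ring
  rw [this]
  linarith
end
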